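/- arXiv:math/0509004 — 3 statements merged into one kernel-verified Lean document; each statement's English description precedes it below -/
import Mathlib

section
/- For every integer n ≥ 3, the homogeneous matching polynomial of the cycle graph satisfies T_n(y,z) = y·z²·U_{n−2}(y,z) + z·U_n(y,z) as an identity of polynomials in ℤ[y,z]. -/
open scoped Classical

noncomputable section

/-- The path graph `P_n` on `Fin n` (vertices `1,…,n` of the paper), edges `{i, i+1}`. -/
def pathG (n : ℕ) : SimpleGraph (Fin n) :=
  SimpleGraph.fromRel (fun i j => (i : ℕ) + 1 = (j : ℕ))

/-- The cycle graph `C_n` on `Fin n`, edges `{i, i+1 mod n}`. -/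
def cycG (n : ℕ) : SimpleGraph (Fin n) :=
  SimpleGraph.fromRel (fun i j => ((i : ℕ) + 1) % n = (j : ℕ))

/-- The matchings of a graph `G`: finsets of pairwise disjoint edges of `G`. -/
def matchings {V : Type*} [Fintype V] (G : SimpleGraph V) : Finset (Finset (Sym2 V)) :=
  Finset.univ.filter (fun μ =>
    (↑μ : Set (Sym2 V)) ⊆ G.edgeSet ∧
    ∀ e ∈ μ, ∀ f ∈ μ, e ≠ f → ∀ v : V, v ∈ e → v ∉ f)

/-- `U_m(Y,Z) = Σ_{μ matching of P_m} Y^{|μ|} Z^{(m-1)-|μ|}`,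
the homogeneous matching polynomial of the path `P_m`, evaluated at `Y`, `Z`. -/
def Upoly {S : Type*} [CommSemiring S] (m : ℕ) (Y Z : S) : S :=
  ∑ μ ∈ matchings (pathG m), Y ^ μ.card * Z ^ ((m - 1) - μ.card)

/-- `T_m(Y,Z) = Σ_{μ matching of C_m} Y^{|μ|} Z^{m-|μ|}`,
the homogeneous matching polynomial of the cycle `C_m` (`m ≥ 3`), evaluated at `Y`, `Z`. -/
def Tpoly {S : Type*} [CommSemiring S] (m : ℕ) (Y Z : S) : S :=
  ∑ μ ∈ matchings (cycG m), Y ^ μ.card * Z ^ (m - μ.card)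

/-! ### Auxiliary lemmas -/

lemma mem_matchings {V : Type*} [Fintype V] {G : SimpleGraph V} {μ : Finset (Sym2 V)} :
    μ ∈ matchings G ↔ (∀ e ∈ μ, e ∈ G.edgeSet) ∧
      ∀ e ∈ μ, ∀ f ∈ μ, e ≠ f → ∀ v, v ∈ e → v ∉ f := by
  simp [matchings, Set.subset_def]

lemma pathG_adj {m : ℕ} {i j : Fin m} :
    (pathG m).Adj i j ↔ ((i : ℕ) + 1 = j ∨ (j : ℕ) + 1 = i) := by
  rw [pathG, SimpleGraph.fromRel_adj]
  constructor
  · rintro ⟨_, h⟩; exact h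
  · intro h
    refine ⟨fun hij => ?_, h⟩
    subst hij
    omega

lemma cycG_adj {m : ℕ} (hm : 3 ≤ m) {i j : Fin m} :
    (cycG m).Adj i j ↔ (((i : ℕ) + 1) % m = j ∨ ((j : ℕ) + 1) % m = i) := by
  rw [cycG, SimpleGraph.fromRel_adj]
  constructor
  · rintro ⟨_, h⟩; exact h
  · intro h
    refine ⟨fun hij => ?_, h⟩
    subst hij
    have hi : (i : ℕ) < m := i.isLt
    rcases Nat.lt_or_ge ((i : ℕ) + 1) m with h1 | h1
    · rw [Nat.mod_eq_of_lt h1] at h; omega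
    · have h2 : (i : ℕ) + 1 = m := by omega
      rw [h2, Nat.mod_self] at h; omega

lemma mod_succ_cases (m v : ℕ) (hv : v < m) :
    ((v + 1) % m = v + 1 ∧ v + 1 < m) ∨ (v = m - 1 ∧ (v + 1) % m = 0) := by
  rcases Nat.lt_or_ge (v + 1) m with h | h
  · exact Or.inl ⟨Nat.mod_eq_of_lt h, h⟩
  · have h2 : v + 1 = m := by omega
    exact Or.inr ⟨by omega, by rw [h2, Nat.mod_self]⟩

/-- the wrap-around edge of the cycle -/
def e0 (k : ℕ) : Sym2 (Fin (k + 3)) := s((⟨k + 2, by omega⟩ : Fin (k + 3)), ⟨0, by omega⟩)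

lemma cyc_edge_iff (k : ℕ) (a b : Fin (k + 3)) :
    (cycG (k + 3)).Adj a b ↔ (pathG (k + 3)).Adj a b ∨ s(a, b) = e0 k := by
  rw [cycG_adj (by omega), pathG_adj, e0, Sym2.eq_iff]
  have ha := a.isLt; have hb := b.isLt
  rcases mod_succ_cases (k + 3) a (by omega) with ⟨h1, h1'⟩ | ⟨h1, h1'⟩ <;>
    rcases mod_succ_cases (k + 3) b (by omega) with ⟨h2, h2'⟩ | ⟨h2, h2'⟩ <;>
      simp only [Fin.ext_iff] <;> omega

/-- minimum value of an edge -/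
def vmin {m : ℕ} : Sym2 (Fin m) → ℕ :=
  Sym2.lift ⟨fun a b => min (a : ℕ) (b : ℕ), fun a b => min_comm _ _⟩

lemma vmin_mem {m : ℕ} (e : Sym2 (Fin m)) : ∃ v ∈ e, (v : ℕ) = vmin e := by
  induction e using Sym2.ind with
  | _ a b =>
    have hv : vmin s(a, b) = min (a : ℕ) (b : ℕ) := rfl
    rcases min_cases (a : ℕ) (b : ℕ) with ⟨h, -⟩ | ⟨h, -⟩
    · exact ⟨a, Sym2.mem_mk_left a b, by rw [hv, h]⟩
    · exact ⟨b, Sym2.mem_mk_right a b, by rw [hv, h]⟩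

lemma path_edge_vmin {m : ℕ} {e : Sym2 (Fin m)} (he : e ∈ (pathG m).edgeSet) :
    vmin e + 1 < m := by
  induction e using Sym2.ind with
  | _ a b =>
    rw [SimpleGraph.mem_edgeSet, pathG_adj] at he
    have ha := a.isLt; have hb := b.isLt
    have hv : vmin s(a, b) = min (a : ℕ) (b : ℕ) := rfl
    rw [hv]; omega

lemma matching_card_le {m : ℕ} {μ : Finset (Sym2 (Fin m))} (hμ : μ ∈ matchings (pathG m)) :
    μ.card ≤ m - 1 := by
  rw [mem_matchings] at hμ
  obtain ⟨hedge, hdisj⟩ := hμ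
  have key : μ.card ≤ (Finset.range (m - 1)).card := by
    apply Finset.card_le_card_of_injOn vmin
    · intro e he
      have := path_edge_vmin (hedge e he)
      rw [Finset.coe_range, Set.mem_Iio]; omega
    · intro e he f hf hef
      by_contra hne
      obtain ⟨v, hv, hv'⟩ := vmin_mem e
      obtain ⟨w, hw, hw'⟩ := vmin_mem f
      have : v = w := Fin.ext (by rw [hv', hw', hef])
      exact hdisj e he f hf hne v hv (this ▸ hw)
  simpa using key

lemma e0_mem (k : ℕ) : e0 k ∈ (cycG (k + 3)).edgeSet := by
  rw [e0, SimpleGraph.mem_edgeSet, cycG_adj (by omega)]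
  left
  simp [Nat.mod_self]

lemma e0_not_path (k : ℕ) : e0 k ∉ (pathG (k + 3)).edgeSet := by
  rw [e0, SimpleGraph.mem_edgeSet, pathG_adj]
  simp

lemma path_le_cyc {k : ℕ} {e : Sym2 (Fin (k + 3))} (he : e ∈ (pathG (k + 3)).edgeSet) :
    e ∈ (cycG (k + 3)).edgeSet := by
  induction e using Sym2.ind with
  | _ a b =>
    rw [SimpleGraph.mem_edgeSet] at *
    exact (cyc_edge_iff k a b).mpr (Or.inl he)

lemma cyc_edge_cases {k : ℕ} {e : Sym2 (Fin (k + 3))} (he : e ∈ (cycG (k + 3)).edgeSet) :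
    e ∈ (pathG (k + 3)).edgeSet ∨ e = e0 k := by
  induction e using Sym2.ind with
  | _ a b =>
    rw [SimpleGraph.mem_edgeSet] at *
    exact (cyc_edge_iff k a b).mp he

/-! ### Part 1 : matchings of the cycle avoiding `e0` are matchings of the path -/

lemma filter_not_e0 (k : ℕ) :
    (matchings (cycG (k + 3))).filter (fun μ => e0 k ∉ μ) = matchings (pathG (k + 3)) := by
  ext μ
  rw [Finset.mem_filter, mem_matchings, mem_matchings]
  constructor
  · rintro ⟨⟨hedge, hdisj⟩, hne⟩
    refine ⟨fun e he => ?_, hdisj⟩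
    rcases cyc_edge_cases (hedge e he) with h | h
    · exact h
    · exact absurd (h ▸ he) hne
  · rintro ⟨hedge, hdisj⟩
    refine ⟨⟨fun e he => path_le_cyc (hedge e he), hdisj⟩, fun he0 => ?_⟩
    exact e0_not_path k (hedge _ he0)

/-! ### Part 2 : the bijection for matchings containing `e0` -/

def up (k : ℕ) : Fin (k + 1) → Fin (k + 3) := fun x => ⟨x.val + 1, by omega⟩

def down (k : ℕ) : Fin (k + 3) → Fin (k + 1) :=
  fun x => ⟨(x.val - 1) % (k + 1), Nat.mod_lt _ (Nat.succ_pos k)⟩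

lemma up_inj (k : ℕ) : Function.Injective (up k) := by
  intro x y h
  have := congrArg Fin.val h
  simp only [up] at this
  exact Fin.ext (by omega)

lemma down_up (k : ℕ) (x : Fin (k + 1)) : down k (up k x) = x := by
  have hx := x.isLt
  apply Fin.ext
  simp only [down, up]
  rw [Nat.add_sub_cancel, Nat.mod_eq_of_lt hx]

lemma up_down {k : ℕ} {v : Fin (k + 3)} (h1 : 1 ≤ (v : ℕ)) (h2 : (v : ℕ) ≤ k + 1) :
    up k (down k v) = v := by
  apply Fin.ext
  simp only [down, up]
  rw [Nat.mod_eq_of_lt (by omega)]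
  omega

lemma map_down_up (k : ℕ) (e : Sym2 (Fin (k + 1))) :
    Sym2.map (down k) (Sym2.map (up k) e) = e := by
  rw [Sym2.map_map]
  have h : down k ∘ up k = id := funext (down_up k)
  rw [h, Sym2.map_id, id]

lemma map_up_down {k : ℕ} {e : Sym2 (Fin (k + 3))}
    (h : ∀ v ∈ e, 1 ≤ (v : ℕ) ∧ (v : ℕ) ≤ k + 1) :
    Sym2.map (up k) (Sym2.map (down k) e) = e := by
  induction e using Sym2.ind with
  | _ a b =>
    rw [Sym2.map_pair_eq, Sym2.map_pair_eq]
    obtain ⟨ha1, ha2⟩ := h a (Sym2.mem_mk_left a b)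
    obtain ⟨hb1, hb2⟩ := h b (Sym2.mem_mk_right a b)
    rw [up_down ha1 ha2, up_down hb1 hb2]

lemma inner_edge {k : ℕ} {μ : Finset (Sym2 (Fin (k + 3)))}
    (hμ : μ ∈ matchings (cycG (k + 3))) (he0 : e0 k ∈ μ)
    {e : Sym2 (Fin (k + 3))} (he : e ∈ μ) (hne : e ≠ e0 k) :
    e ∈ (pathG (k + 3)).edgeSet ∧ ∀ v ∈ e, 1 ≤ (v : ℕ) ∧ (v : ℕ) ≤ k + 1 := by
  rw [mem_matchings] at hμ
  have hpath : e ∈ (pathG (k + 3)).edgeSet := by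
    rcases cyc_edge_cases (hμ.1 e he) with h | h
    · exact h
    · exact absurd h hne
  refine ⟨hpath, fun v hv => ?_⟩
  have hdisj := hμ.2 e he (e0 k) he0 hne v hv
  rw [e0, Sym2.mem_iff] at hdisj
  push_neg at hdisj
  obtain ⟨h1, h2⟩ := hdisj
  have hv1 : (v : ℕ) ≠ k + 2 := fun h => h1 (Fin.ext h)
  have hv2 : (v : ℕ) ≠ 0 := fun h => h2 (Fin.ext h)
  have := v.isLt
  omega

lemma up_edge {k : ℕ} {e : Sym2 (Fin (k + 1))} (he : e ∈ (pathG (k + 1)).edgeSet) :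
    Sym2.map (up k) e ∈ (pathG (k + 3)).edgeSet := by
  induction e using Sym2.ind with
  | _ a b =>
    rw [Sym2.map_pair_eq, SimpleGraph.mem_edgeSet, pathG_adj] at *
    simp only [up] at *
    omega

lemma down_edge {k : ℕ} {e : Sym2 (Fin (k + 3))} (he : e ∈ (pathG (k + 3)).edgeSet)
    (hr : ∀ v ∈ e, 1 ≤ (v : ℕ) ∧ (v : ℕ) ≤ k + 1) :
    Sym2.map (down k) e ∈ (pathG (k + 1)).edgeSet := by
  induction e using Sym2.ind with
  | _ a b =>
    obtain ⟨ha1, ha2⟩ := hr a (Sym2.mem_mk_left a b)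
    obtain ⟨hb1, hb2⟩ := hr b (Sym2.mem_mk_right a b)
    rw [Sym2.map_pair_eq, SimpleGraph.mem_edgeSet, pathG_adj] at *
    simp only [down] at *
    rw [Nat.mod_eq_of_lt (by omega), Nat.mod_eq_of_lt (by omega)]
    omega

lemma up_vertex_range {k : ℕ} {e : Sym2 (Fin (k + 1))} {v : Fin (k + 3)}
    (hv : v ∈ Sym2.map (up k) e) : 1 ≤ (v : ℕ) ∧ (v : ℕ) ≤ k + 1 := by
  rw [Sym2.mem_map] at hv
  obtain ⟨w, -, rfl⟩ := hv
  have := w.isLt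
  simp only [up]
  omega

lemma e0_not_mem_image {k : ℕ} (μ' : Finset (Sym2 (Fin (k + 1)))) :
    e0 k ∉ μ'.image (Sym2.map (up k)) := by
  intro h
  rw [Finset.mem_image] at h
  obtain ⟨e, -, he⟩ := h
  have h0 : (⟨0, by omega⟩ : Fin (k + 3)) ∈ e0 k := Sym2.mem_mk_right _ _
  rw [← he] at h0
  have := (up_vertex_range h0).1
  simp at this

/-- forward map -/
def Fwd (k : ℕ) (μ' : Finset (Sym2 (Fin (k + 1)))) : Finset (Sym2 (Fin (k + 3))) :=
  insert (e0 k) (μ'.image (Sym2.map (up k)))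

/-- backward map -/
def Bwd (k : ℕ) (μ : Finset (Sym2 (Fin (k + 3)))) : Finset (Sym2 (Fin (k + 1))) :=
  (μ.erase (e0 k)).image (Sym2.map (down k))

lemma Fwd_mem {k : ℕ} {μ' : Finset (Sym2 (Fin (k + 1)))}
    (hμ' : μ' ∈ matchings (pathG (k + 1))) :
    Fwd k μ' ∈ (matchings (cycG (k + 3))).filter (fun μ => e0 k ∈ μ) := by
  rw [mem_matchings] at hμ'
  obtain ⟨hedge, hdisj⟩ := hμ'
  rw [Finset.mem_filter, mem_matchings]
  refine ⟨⟨?_, ?_⟩, Finset.mem_insert_self _ _⟩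
  · intro e he
    rcases Finset.mem_insert.mp he with rfl | he
    · exact e0_mem k
    · rw [Finset.mem_image] at he
      obtain ⟨f, hf, rfl⟩ := he
      exact path_le_cyc (up_edge (hedge f hf))
  · intro e he f hf hne v hv hvf
    rcases Finset.mem_insert.mp he with rfl | he <;>
      rcases Finset.mem_insert.mp hf with rfl | hf
    · exact hne rfl
    · -- v ∈ e0, v ∈ image
      rw [Finset.mem_image] at hf
      obtain ⟨g, hg, rfl⟩ := hf
      have hr := up_vertex_range hvf
      rw [e0, Sym2.mem_iff] at hv
      rcases hv with rfl | rfl <;> simp at hr <;> omega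
    · rw [Finset.mem_image] at he
      obtain ⟨g, hg, rfl⟩ := he
      have hr := up_vertex_range hv
      rw [e0, Sym2.mem_iff] at hvf
      rcases hvf with rfl | rfl <;> simp at hr <;> omega
    · rw [Finset.mem_image] at he hf
      obtain ⟨g, hg, rfl⟩ := he
      obtain ⟨g', hg', rfl⟩ := hf
      have hgg' : g ≠ g' := fun h => hne (by rw [h])
      rw [Sym2.mem_map] at hv hvf
      obtain ⟨w, hw, hwv⟩ := hv
      obtain ⟨w', hw', hwv'⟩ := hvf
      have : w = w' := up_inj k (by rw [hwv, hwv'])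
      exact hdisj g hg g' hg' hgg' w hw (this ▸ hw')

lemma Bwd_mem {k : ℕ} {μ : Finset (Sym2 (Fin (k + 3)))}
    (hμ : μ ∈ (matchings (cycG (k + 3))).filter (fun μ => e0 k ∈ μ)) :
    Bwd k μ ∈ matchings (pathG (k + 1)) := by
  rw [Finset.mem_filter] at hμ
  obtain ⟨hμm, he0⟩ := hμ
  have hμm' := hμm
  rw [mem_matchings] at hμm'
  rw [mem_matchings]
  constructor
  · intro e he
    rw [Bwd, Finset.mem_image] at he
    obtain ⟨f, hf, rfl⟩ := he
    obtain ⟨hf1, hf2⟩ := Finset.mem_erase.mp hf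
    obtain ⟨hp, hr⟩ := inner_edge hμm he0 hf2 hf1
    exact down_edge hp hr
  · intro e he f hf hne v hv hvf
    rw [Bwd, Finset.mem_image] at he hf
    obtain ⟨g, hg, rfl⟩ := he
    obtain ⟨g', hg', rfl⟩ := hf
    obtain ⟨hg1, hg2⟩ := Finset.mem_erase.mp hg
    obtain ⟨hg'1, hg'2⟩ := Finset.mem_erase.mp hg'
    have hgg' : g ≠ g' := fun h => hne (by rw [h])
    rw [Sym2.mem_map] at hv hvf
    obtain ⟨w, hw, hwv⟩ := hv
    obtain ⟨w', hw', hwv'⟩ := hvf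
    obtain ⟨-, hrw⟩ := inner_edge hμm he0 hg2 hg1
    obtain ⟨-, hrw'⟩ := inner_edge hμm he0 hg'2 hg'1
    obtain ⟨h1, h2⟩ := hrw w hw
    obtain ⟨h1', h2'⟩ := hrw' w' hw'
    have : w = w' := by
      have e1 : up k (down k w) = w := up_down h1 h2
      have e2 : up k (down k w') = w' := up_down h1' h2'
      rw [← e1, ← e2, hwv, hwv']
    exact hμm'.2 g hg2 g' hg'2 hgg' w hw (this ▸ hw')

lemma Bwd_Fwd {k : ℕ} (μ' : Finset (Sym2 (Fin (k + 1)))) : Bwd k (Fwd k μ') = μ' := by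
  rw [Bwd, Fwd, Finset.erase_insert (e0_not_mem_image μ'), Finset.image_image]
  have : (Sym2.map (down k) ∘ Sym2.map (up k)) = id := funext (map_down_up k)
  rw [this, Finset.image_id]

lemma Fwd_Bwd {k : ℕ} {μ : Finset (Sym2 (Fin (k + 3)))}
    (hμ : μ ∈ (matchings (cycG (k + 3))).filter (fun μ => e0 k ∈ μ)) :
    Fwd k (Bwd k μ) = μ := by
  rw [Finset.mem_filter] at hμ
  obtain ⟨hμm, he0⟩ := hμ
  rw [Fwd, Bwd, Finset.image_image]
  have himg : (μ.erase (e0 k)).image (Sym2.map (up k) ∘ Sym2.map (down k)) = μ.erase (e0 k) := by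
    rw [show (μ.erase (e0 k)).image (Sym2.map (up k) ∘ Sym2.map (down k))
        = (μ.erase (e0 k)).image id from Finset.image_congr (fun e he => by
      obtain ⟨hne, hmem⟩ := Finset.mem_erase.mp he
      exact map_up_down (inner_edge hμm he0 hmem hne).2), Finset.image_id]
  rw [himg, Finset.insert_erase he0]

lemma Fwd_card {k : ℕ} (μ' : Finset (Sym2 (Fin (k + 1)))) :
    (Fwd k μ').card = μ'.card + 1 := by
  rw [Fwd, Finset.card_insert_of_notMem (e0_not_mem_image μ'),
    Finset.card_image_of_injective _ (Sym2.map.injective (up_inj k))]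

/-! ### Main theorem -/

lemma main_aux (k : ℕ) :
    (Tpoly (k + 3) (MvPolynomial.X 0) (MvPolynomial.X 1) : MvPolynomial (Fin 2) ℤ) =
      MvPolynomial.X 0 * MvPolynomial.X 1 ^ 2 *
          Upoly (k + 1) (MvPolynomial.X 0) (MvPolynomial.X 1) +
        MvPolynomial.X 1 * Upoly (k + 3) (MvPolynomial.X 0) (MvPolynomial.X 1) := by
  set Y : MvPolynomial (Fin 2) ℤ := MvPolynomial.X 0
  set Z : MvPolynomial (Fin 2) ℤ := MvPolynomial.X 1
  rw [Tpoly, ← Finset.sum_filter_add_sum_filter_not (matchings (cycG (k + 3)))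
    (fun μ => e0 k ∈ μ)]
  congr 1
  · -- matchings containing e0
    rw [Upoly, Finset.mul_sum]
    refine (Finset.sum_nbij' (Bwd k) (Fwd k) (fun μ hμ => Bwd_mem hμ)
      (fun μ' hμ' => Fwd_mem hμ') (fun μ hμ => Fwd_Bwd hμ) (fun μ' hμ' => Bwd_Fwd μ')
      (fun μ hμ => ?_))
    have hc : (Bwd k μ).card + 1 = μ.card := by
      rw [← Fwd_card (Bwd k μ), Fwd_Bwd hμ]
    have hcle : (Bwd k μ).card ≤ k := by
      simpa using matching_card_le (Bwd_mem hμ)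
    set c := (Bwd k μ).card
    rw [← hc]
    have h1 : k + 3 - (c + 1) = (k - c) + 2 := by omega
    have h2 : (k + 1 - 1) - c = k - c := by omega
    rw [h1, h2]
    ring
  · -- matchings avoiding e0
    rw [filter_not_e0, Upoly, Finset.mul_sum]
    refine Finset.sum_congr rfl (fun μ hμ => ?_)
    have hcle : μ.card ≤ k + 2 := by
      simpa using matching_card_le hμ
    have h1 : k + 3 - μ.card = ((k + 3 - 1) - μ.card) + 1 := by omega
    rw [h1]
    ring

/-- for `n ≥ 3`, `T_n(y,z) = y·z²·U_{n-2}(y,z) + z·U_n(y,z)` in `ℤ[y,z]`. -/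
theorem cycle_matching_recurrence (n : ℕ) (hn : 3 ≤ n) :
    (Tpoly n (MvPolynomial.X 0) (MvPolynomial.X 1) : MvPolynomial (Fin 2) ℤ) =
      MvPolynomial.X 0 * MvPolynomial.X 1 ^ 2 *
          Upoly (n - 2) (MvPolynomial.X 0) (MvPolynomial.X 1) +
        MvPolynomial.X 1 * Upoly n (MvPolynomial.X 0) (MvPolynomial.X 1) := by
  obtain ⟨k, rfl⟩ : ∃ k, n = k + 3 := ⟨n - 3, by omega⟩
  have h2 : k + 3 - 2 = k + 1 := by omega
  rw [h2]
  exact main_aux k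
end
end

section
/- Let n ≥ 3 be odd and let C_n be the cycle graph on vertices {0,1,…,n−1} with edges {i, i+1 mod n}. Then Σ_{σ ∈ Aut(C_n)} w(C_n,σ) = Σ_{d | n} φ(d)·a_d^{n/d}·b_d^{n/d} + n·a_1·a_2^{(n−1)/2}·b_2^{(n−1)/2}·c_1, where φ is the Euler totient function. -/
open scoped Classical

noncomputable section

/-- Variables of the Walsh cycle index ring: `a k`, `b k`, `c k` for `k ≥ 1`. -/
inductive WVar : Type
  | a : ℕ → WVar
  | b : ℕ → WVar
  | c : ℕ → WVar

/-- The Walsh cycle index ring `ℚ[a₁,a₂,…;b₁,b₂,…;c₁,c₂,…]`. -/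
abbrev WRing : Type := MvPolynomial WVar ℚ

/-- The variable `a_k`. -/
def va (k : ℕ) : WRing := MvPolynomial.X (WVar.a k)
/-- The variable `b_k`. -/
def vb (k : ℕ) : WRing := MvPolynomial.X (WVar.b k)
/-- The variable `c_k`. -/
def vc (k : ℕ) : WRing := MvPolynomial.X (WVar.c k)

/-- The permutation induced by `σ` on unordered pairs. -/
def edgePerm {V : Type*} (σ : Equiv.Perm V) : Equiv.Perm (Sym2 V) where
  toFun := Sym2.map σ
  invFun := Sym2.map σ.symm
  left_inv := by intro e; induction e using Sym2.ind with | _ x y => simp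
  right_inv := by intro e; induction e using Sym2.ind with | _ x y => simp

/-- The size of the cycle (orbit) of `σ` through the vertex `v`. -/
def orbSize {V : Type*} [Fintype V] (σ : Equiv.Perm V) (v : V) : ℕ :=
  (Finset.univ.filter fun u => σ.SameCycle v u).card

/-- `σ_k`: the number of `k`-cycles of `σ` on the vertices. -/
def vcyc {V : Type*} [Fintype V] (σ : Equiv.Perm V) (k : ℕ) : ℕ :=
  (Finset.univ.filter fun v => orbSize σ v = k).card / k

/-- The length of the cycle of the induced edge permutation through `e`. -/
def eOrbLen {V : Type*} [Fintype V] (σ : Equiv.Perm V) (e : Sym2 V) : ℕ :=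
  (Finset.univ.filter fun f => (edgePerm σ).SameCycle e f).card

/-- The edge cycle through `e` (of length `l = eOrbLen σ e`) is cylindrical:
`σ^l` fixes both endpoints of every edge of the cycle. -/
def IsCylE {V : Type*} [Fintype V] (σ : Equiv.Perm V) (e : Sym2 V) : Prop :=
  ∀ f : Sym2 V, (edgePerm σ).SameCycle e f → ∀ u v : V, f = s(u, v) →
    (σ ^ eOrbLen σ e) u = u ∧ (σ ^ eOrbLen σ e) v = v

/-- The edge cycle through `e` (of length `l = eOrbLen σ e`) is Möbius:
`σ^l` exchanges the endpoints of every edge of the cycle. -/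
def IsMobE {V : Type*} [Fintype V] (σ : Equiv.Perm V) (e : Sym2 V) : Prop :=
  ∀ f : Sym2 V, (edgePerm σ).SameCycle e f → ∀ u v : V, f = s(u, v) →
    u ≠ v ∧ (σ ^ eOrbLen σ e) u = v ∧ (σ ^ eOrbLen σ e) v = u

/-- The edge set of `G` as a finset. -/
def eFin {V : Type*} [Fintype V] (G : SimpleGraph V) : Finset (Sym2 V) :=
  G.edgeFinset

/-- `cyl_k(G,σ)`: the number of cylindrical edge cycles of length `k` induced by `σ`. -/
def cylCnt {V : Type*} [Fintype V] (G : SimpleGraph V) (σ : Equiv.Perm V) (k : ℕ) : ℕ :=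
  ((eFin G).filter fun e => eOrbLen σ e = k ∧ IsCylE σ e).card / k

/-- `möb_k(G,σ)`: the number of Möbius edge cycles of length `k` induced by `σ`. -/
def mobCnt {V : Type*} [Fintype V] (G : SimpleGraph V) (σ : Equiv.Perm V) (k : ℕ) : ℕ :=
  ((eFin G).filter fun e => eOrbLen σ e = k ∧ IsMobE σ e).card / k

/-- The cycle index monomial
`w(G,σ) = ∏_k a_k^{σ_k} ∏_k b_k^{cyl_k(G,σ)} ∏_k c_k^{möb_k(G,σ)}`
(all cycle lengths occurring are `< card V * card V + 2`, so the finite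
products below capture all nontrivial factors). -/
def w {V : Type*} [Fintype V] (G : SimpleGraph V) (σ : Equiv.Perm V) : WRing :=
  (∏ k ∈ Finset.range (Fintype.card V * Fintype.card V + 2), va k ^ vcyc σ k) *
  (∏ k ∈ Finset.range (Fintype.card V * Fintype.card V + 2), vb k ^ cylCnt G σ k) *
  (∏ k ∈ Finset.range (Fintype.card V * Fintype.card V + 2), vc k ^ mobCnt G σ k)

/-- The automorphisms of `G`, as a finset of permutations of the vertices. -/
def autF {V : Type*} [Fintype V] (G : SimpleGraph V) : Finset (Equiv.Perm V) :=
  Finset.univ.filter fun σ => ∀ u v : V, G.Adj (σ u) (σ v) ↔ G.Adj u v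

/-! ### Auxiliary lemmas -/

open Fin.NatCast Fin.CommRing

section WalshAux

open Finset

lemma wcConj {α β : Type*} (π : Equiv.Perm β) (ρ : Equiv.Perm α) (ι : α → β)
    (h : ∀ x, π (ι x) = ι (ρ x)) (z : ℤ) : ∀ x, (π ^ z) (ι x) = ι ((ρ ^ z) x) := by
  have hinv : ∀ x, π⁻¹ (ι x) = ι (ρ⁻¹ x) := by
    intro x
    apply π.injective
    rw [h]; simp [Equiv.Perm.inv_def]
  induction z using Int.induction_on with
  | zero => simp
  | succ k ih =>
      intro x
      rw [zpow_add_one, zpow_add_one, Equiv.Perm.mul_apply, Equiv.Perm.mul_apply, h, ih]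
  | pred k ih =>
      intro x
      rw [zpow_sub_one, zpow_sub_one, Equiv.Perm.mul_apply, Equiv.Perm.mul_apply, hinv, ih]

lemma wcFilterImage {α β : Type*} [Fintype α] [Fintype β] [DecidableEq β]
    (π : Equiv.Perm β) (ρ : Equiv.Perm α) (ι : α → β)
    (h : ∀ x, π (ι x) = ι (ρ x)) (i : α) :
    (Finset.univ.filter fun f => π.SameCycle (ι i) f) =
      (Finset.univ.filter fun j => ρ.SameCycle i j).image ι := by
  ext f
  simp only [Finset.mem_filter, Finset.mem_univ, true_and, Finset.mem_image]
  constructor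
  · rintro ⟨z, hz⟩
    exact ⟨(ρ ^ z) i, ⟨⟨z, rfl⟩, by rw [← wcConj π ρ ι h z i, hz]⟩⟩
  · rintro ⟨j, ⟨z, hz⟩, rfl⟩
    exact ⟨z, by rw [wcConj π ρ ι h z i, hz]⟩

lemma wcAddLeftZpow {G : Type*} [AddCommGroup G] (a : G) (z : ℤ) :
    ∀ v : G, ((Equiv.addLeft a : Equiv.Perm G) ^ z) v = z • a + v := by
  have hinv : (Equiv.addLeft a : Equiv.Perm G)⁻¹ = Equiv.addLeft (-a) := by
    ext x; simp [Equiv.Perm.inv_def]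
  induction z using Int.induction_on with
  | zero => simp
  | succ k ih =>
      intro v
      rw [zpow_add_one, Equiv.Perm.mul_apply, add_zsmul, one_zsmul]
      show (Equiv.addLeft a ^ (k:ℤ)) (a + v) = _
      rw [ih]; abel
  | pred k ih =>
      intro v
      rw [zpow_sub_one, Equiv.Perm.mul_apply, hinv, sub_zsmul, one_zsmul]
      show (Equiv.addLeft a ^ (-(k:ℤ))) (-a + v) = _
      rw [ih]; abel

lemma wcInvolSameCycle {α : Type*} (σ : Equiv.Perm α) (hσ : σ * σ = 1) (v u : α) :
    σ.SameCycle v u ↔ u = v ∨ u = σ v := by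
  constructor
  · rintro ⟨z, rfl⟩
    rcases Int.even_or_odd z with ⟨m, hm⟩ | ⟨m, hm⟩
    · left
      rw [hm, ← two_mul, zpow_mul]
      norm_num [zpow_two, pow_two, hσ]
    · right
      rw [hm, zpow_add_one, zpow_mul]
      norm_num [zpow_two, pow_two, hσ]
  · rintro (rfl | rfl)
    · exact ⟨0, by simp⟩
    · exact ⟨1, by simp⟩

lemma wcOrbFilterInvol {α : Type*} [Fintype α] (σ : Equiv.Perm α)
    (hσ : σ * σ = 1) (v : α) :
    (Finset.univ.filter fun u => σ.SameCycle v u) = {v, σ v} := by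
  ext u
  simp [wcInvolSameCycle σ hσ]

lemma wcOrbSizeInvol {α : Type*} [Fintype α] (σ : Equiv.Perm α)
    (hσ : σ * σ = 1) (v : α) :
    orbSize σ v = if σ v = v then 1 else 2 := by
  rw [orbSize, wcOrbFilterInvol σ hσ]
  split_ifs with h
  · simp [h]
  · rw [Finset.card_pair (fun hh => h hh.symm)]

variable {n : ℕ}

lemma finOne (hn : 3 ≤ n) [NeZero n] : (1 : Fin n) ≠ 0 := by
  intro h
  have h2 : ((1:ℕ) : Fin n) = (1 : Fin n) := by norm_cast
  rw [← h2] at h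
  have := congrArg Fin.val h
  rw [Fin.val_natCast, Fin.val_zero, Nat.mod_eq_of_lt (by omega)] at this
  omega

lemma finTwo (hn : 3 ≤ n) [NeZero n] : (2 : Fin n) ≠ 0 := by
  intro h
  have h2 : ((2:ℕ) : Fin n) = (2 : Fin n) := by norm_cast
  rw [← h2] at h
  have := congrArg Fin.val h
  rw [Fin.val_natCast, Fin.val_zero, Nat.mod_eq_of_lt (by omega)] at this
  omega

lemma finNeAddOne (hn : 3 ≤ n) [NeZero n] (x : Fin n) : x ≠ x + 1 := by
  intro h
  exact finOne hn (by simpa using (left_eq_add.mp h).symm)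

lemma cycAdj (hn : 3 ≤ n) [NeZero n] (i j : Fin n) :
    (cycG n).Adj i j ↔ i ≠ j ∧ (j = i + 1 ∨ i = j + 1) := by
  have key : ∀ u v : Fin n, (((u : ℕ) + 1) % n = (v : ℕ)) ↔ v = u + 1 := by
    intro u v
    rw [Fin.ext_iff, Fin.val_add, Fin.val_one', Nat.mod_eq_of_lt (show 1 < n by omega)]
    exact eq_comm
  rw [cycG, SimpleGraph.fromRel_adj, key, key]

lemma cycAdjSucc (hn : 3 ≤ n) [NeZero n] (i : Fin n) : (cycG n).Adj i (i + 1) := by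
  rw [cycAdj hn]
  exact ⟨finNeAddOne hn i, Or.inl rfl⟩

lemma castSucc [NeZero n] (k : ℕ) : ((k + 1 : ℕ) : Fin n) = (k : Fin n) + 1 := by
  push_cast; ring

lemma autDetermined (hn : 3 ≤ n) [NeZero n] (σ : Equiv.Perm (Fin n))
    (hA : ∀ u v, (cycG n).Adj (σ u) (σ v) ↔ (cycG n).Adj u v)
    (g : Fin n → Fin n) (h0 : σ 0 = g 0) (h1 : σ 1 = g 1)
    (hg : ∀ x : Fin n, (g x + 1 = g (x + 1) ∧ g x - 1 = g (x - 1)) ∨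
      (g x + 1 = g (x - 1) ∧ g x - 1 = g (x + 1))) :
    ∀ x : Fin n, σ x = g x := by
  have key : ∀ k : ℕ, σ (k : Fin n) = g (k : Fin n) ∧
      σ ((k : Fin n) + 1) = g ((k : Fin n) + 1) := by
    intro k
    induction k with
    | zero => simpa using ⟨h0, h1⟩
    | succ k ih =>
      obtain ⟨hk, hk1⟩ := ih
      rw [castSucc]
      refine ⟨hk1, ?_⟩
      set i : Fin n := (k : Fin n) + 1 with hi
      have hadj : (cycG n).Adj (σ i) (σ (i + 1)) := (hA i (i + 1)).mpr (cycAdjSucc hn i)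
      rw [cycAdj hn] at hadj
      have him : i - 1 = (k : Fin n) := by rw [hi]; ring
      have htwo : (i + 1 : Fin n) ≠ (k : Fin n) := by
        intro h
        rw [hi] at h
        have h2 : (k : Fin n) + (1 + 1) = (k : Fin n) + 0 := by
          rw [← add_assoc, add_zero, h]
        have h3 := add_left_cancel h2
        rw [one_add_one_eq_two] at h3
        exact finTwo hn h3
      rcases hadj.2 with h | h
      · rcases hg i with ⟨hg1, hg2⟩ | ⟨hg1, hg2⟩
        · rw [h, hk1, hg1]
        · exfalso
          have hc : σ (i + 1) = σ (k : Fin n) := by rw [h, hk1, hg1, him, ← hk]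
          exact htwo (σ.injective hc)
      · have h' : σ (i + 1) = σ i - 1 := by rw [h]; ring
        rcases hg i with ⟨hg1, hg2⟩ | ⟨hg1, hg2⟩
        · exfalso
          have hc : σ (i + 1) = σ (k : Fin n) := by rw [h', hk1, hg2, him, ← hk]
          exact htwo (σ.injective hc)
        · rw [h', hk1, hg2]
  intro x
  have := (key x.val).1
  rwa [Fin.cast_val_eq_self] at this

lemma addLeft_aut (hn : 3 ≤ n) [NeZero n] (a : Fin n) (u v : Fin n) :
    (cycG n).Adj (Equiv.addLeft a u) (Equiv.addLeft a v) ↔ (cycG n).Adj u v := by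
  have key : ∀ x y : Fin n, a + y = a + x + 1 ↔ y = x + 1 := by
    intro x y; rw [add_assoc, add_right_inj]
  rw [cycAdj hn, cycAdj hn]
  simp only [Equiv.coe_addLeft, key, ne_eq, add_right_inj]

lemma subLeft_aut (hn : 3 ≤ n) [NeZero n] (a : Fin n) (u v : Fin n) :
    (cycG n).Adj (Equiv.subLeft a u) (Equiv.subLeft a v) ↔ (cycG n).Adj u v := by
  have key : ∀ x y : Fin n, a - y = a - x + 1 ↔ x = y + 1 := by
    intro x y
    have h1 : a - x + 1 = a - (x - 1) := by abel
    rw [h1, sub_right_injective.eq_iff, eq_sub_iff_add_eq, eq_comm]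
  rw [cycAdj hn, cycAdj hn, Equiv.subLeft_apply, Equiv.subLeft_apply]
  rw [key, key, sub_right_injective.ne_iff]
  tauto

lemma autF_cyc (hn : 3 ≤ n) [NeZero n] :
    autF (cycG n) =
      (Finset.univ.image fun a : Fin n => (Equiv.addLeft a : Equiv.Perm (Fin n)))
      ∪ (Finset.univ.image fun a : Fin n => (Equiv.subLeft a : Equiv.Perm (Fin n))) := by
  ext σ
  simp only [autF, Finset.mem_filter, Finset.mem_univ, true_and, Finset.mem_union,
    Finset.mem_image]
  constructor
  · intro hA
    have hadj : (cycG n).Adj (σ 0) (σ 1) := by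
      have := (hA 0 1).mpr (by simpa using cycAdjSucc hn 0)
      exact this
    rw [cycAdj hn] at hadj
    rcases hadj.2 with h | h
    · left
      refine ⟨σ 0, ?_⟩
      have := autDetermined hn σ hA (fun x => σ 0 + x) (by simp) (by rw [h])
        (fun x => Or.inl ⟨by rw [add_assoc], by rw [add_sub_assoc]⟩)
      exact Equiv.ext fun x => (this x).symm
    · right
      refine ⟨σ 0, ?_⟩
      have := autDetermined hn σ hA (fun x => σ 0 - x)
        (by simp) (by show σ 1 = σ 0 - 1; rw [h, add_sub_cancel_right])
        (fun x => Or.inr ⟨by abel, by abel⟩)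
      exact Equiv.ext fun x => (this x).symm
  · rintro (⟨a, rfl⟩ | ⟨a, rfl⟩)
    · exact addLeft_aut hn a
    · exact subLeft_aut hn a

/-! ### Edges of the cycle graph -/

def eIdx [NeZero n] (i : Fin n) : Sym2 (Fin n) := s(i, i + 1)

lemma eIdx_inj (hn : 3 ≤ n) [NeZero n] : Function.Injective (eIdx (n := n)) := by
  intro i j h
  rw [eIdx, eIdx, Sym2.eq_iff] at h
  rcases h with ⟨h1, _⟩ | ⟨h1, h2⟩
  · exact h1
  · exfalso
    rw [← h2] at h1
    have h3 : i + 0 = i + (1 + 1) := by rw [add_zero, ← add_assoc, ← h1]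
    have h4 := (add_left_cancel h3).symm
    rw [one_add_one_eq_two] at h4
    exact finTwo hn h4

lemma eFin_cyc (hn : 3 ≤ n) [NeZero n] :
    eFin (cycG n) = Finset.univ.image (eIdx (n := n)) := by
  ext e
  induction e using Sym2.ind with
  | _ u v =>
    rw [eFin, SimpleGraph.mem_edgeFinset]
    simp only [Finset.mem_image, Finset.mem_univ, true_and]
    constructor
    · intro h
      rw [SimpleGraph.mem_edgeSet, cycAdj hn] at h
      rcases h.2 with h2 | h2
      · exact ⟨u, by rw [eIdx, h2]⟩
      · exact ⟨v, by rw [eIdx, ← h2, Sym2.eq_swap]⟩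
    · rintro ⟨i, h⟩
      rw [← h, eIdx, SimpleGraph.mem_edgeSet]
      exact cycAdjSucc hn i

lemma card_eFin (hn : 3 ≤ n) [NeZero n] : (eFin (cycG n)).card = n := by
  rw [eFin_cyc hn, Finset.card_image_of_injective _ (eIdx_inj hn), Finset.card_univ,
    Fintype.card_fin]

lemma edgePerm_addLeft [NeZero n] (a i : Fin n) :
    edgePerm (Equiv.addLeft a : Equiv.Perm (Fin n)) (eIdx i)
      = eIdx ((Equiv.addLeft a : Equiv.Perm (Fin n)) i) := by
  show Sym2.map _ s(i, i + 1) = s(a + i, a + i + 1)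
  rw [Sym2.map_pair_eq]
  simp only [Equiv.coe_addLeft]
  rw [← add_assoc]

lemma edgePerm_subLeft [NeZero n] (a i : Fin n) :
    edgePerm (Equiv.subLeft a : Equiv.Perm (Fin n)) (eIdx i)
      = eIdx ((Equiv.subLeft (a - 1) : Equiv.Perm (Fin n)) i) := by
  show Sym2.map _ s(i, i + 1) = s(a - 1 - i, a - 1 - i + 1)
  rw [Sym2.map_pair_eq, Sym2.eq_swap]
  simp only [Equiv.subLeft_apply]
  rw [show a - (i + 1) = a - 1 - i from by abel, show a - i = a - 1 - i + 1 from by abel]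

lemma orbSize_addLeft {G : Type*} [AddCommGroup G] [Fintype G] (a v : G) :
    orbSize (Equiv.addLeft a : Equiv.Perm G) v = addOrderOf a := by
  have h1 : (Finset.univ.filter fun u => (Equiv.addLeft a : Equiv.Perm G).SameCycle v u)
      = (Finset.univ.filter fun m : G => m ∈ AddSubgroup.zmultiples a).image (· + v) := by
    ext u
    simp only [Finset.mem_filter, Finset.mem_univ, true_and, Finset.mem_image,
      AddSubgroup.mem_zmultiples_iff]
    constructor
    · rintro ⟨z, hz⟩
      exact ⟨z • a, ⟨z, rfl⟩, by rw [← hz, wcAddLeftZpow]⟩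
    · rintro ⟨m, ⟨z, rfl⟩, rfl⟩
      exact ⟨z, by rw [wcAddLeftZpow]⟩
  rw [orbSize, h1, Finset.card_image_of_injective _ (add_left_injective v)]
  rw [show (Finset.univ.filter fun m : G => m ∈ AddSubgroup.zmultiples a).card
      = Fintype.card (AddSubgroup.zmultiples a) from (Fintype.card_subtype _).symm]
  rw [← Nat.card_eq_fintype_card, Nat.card_zmultiples]

end WalshAux
section WalshAux2

open Finset

variable {n : ℕ}

lemma filterCardEq {α : Type*} (s : Finset α) (p : α → Prop) [DecidablePred p] (t : Finset α)
    (h : ∀ a, a ∈ t ↔ a ∈ s ∧ p a) : (s.filter p).card = t.card := by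
  congr 1
  ext a
  rw [Finset.mem_filter, ← h]

lemma prodSingle {N dd : ℕ} (f : ℕ → ℕ) (x : ℕ → WRing) (hd : dd < N)
    (hf : ∀ k, k ≠ dd → f k = 0) :
    ∏ k ∈ Finset.range N, x k ^ f k = x dd ^ f dd :=
  Finset.prod_eq_single_of_mem dd (Finset.mem_range.mpr hd)
    (fun b _ hb => by rw [hf b hb, pow_zero])

lemma prodPair {N : ℕ} (f : ℕ → ℕ) (x : ℕ → WRing) (hN : 3 ≤ N)
    (hf : ∀ k, k ≠ 1 → k ≠ 2 → f k = 0) :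
    ∏ k ∈ Finset.range N, x k ^ f k = x 1 ^ f 1 * x 2 ^ f 2 := by
  rw [← Finset.prod_subset (show ({1, 2} : Finset ℕ) ⊆ Finset.range N by
      intro k hk
      simp only [Finset.mem_insert, Finset.mem_singleton] at hk
      rcases hk with rfl | rfl <;> simp only [Finset.mem_range] <;> omega)
    (fun k _ hk => by
      simp only [Finset.mem_insert, Finset.mem_singleton, not_or] at hk
      rw [hf k hk.1 hk.2, pow_zero])]
  rw [Finset.prod_insert (by norm_num), Finset.prod_singleton]

lemma prodOne {N : ℕ} (f : ℕ → ℕ) (x : ℕ → WRing) (hf : ∀ k, f k = 0) :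
    ∏ k ∈ Finset.range N, x k ^ f k = 1 :=
  Finset.prod_eq_one fun k _ => by rw [hf, pow_zero]

lemma eOrbLen_eq {V : Type*} [Fintype V] (σ ρ : Equiv.Perm V) (ι : V → Sym2 V)
    (hι : Function.Injective ι) (h : ∀ x, edgePerm σ (ι x) = ι (ρ x)) (i : V) :
    eOrbLen σ (ι i) = orbSize ρ i := by
  rw [eOrbLen, orbSize]
  have h2 := congrArg Finset.card (wcFilterImage (edgePerm σ) ρ ι h i)
  rw [Finset.card_image_of_injective _ hι] at h2
  convert h2 using 2

lemma addLeft_pow_eq_one {G : Type*} [AddCommGroup G] [Fintype G] (a : G) :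
    (Equiv.addLeft a : Equiv.Perm G) ^ addOrderOf a = 1 := by
  apply Equiv.ext
  intro v
  have h := wcAddLeftZpow a (addOrderOf a : ℤ) v
  rw [zpow_natCast] at h
  rw [h, natCast_zsmul, addOrderOf_nsmul_eq_zero, zero_add]
  rfl

lemma subLeft_invol {G : Type*} [AddCommGroup G] (a : G) :
    (Equiv.subLeft a : Equiv.Perm G) * Equiv.subLeft a = 1 :=
  Equiv.ext fun x => by
    show a - (a - x) = x
    rw [sub_sub_cancel]

lemma edgePerm_subLeft_invol {G : Type*} [AddCommGroup G] (a : G) :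
    edgePerm (Equiv.subLeft a : Equiv.Perm G) * edgePerm (Equiv.subLeft a) = 1 := by
  apply Equiv.ext
  intro e
  induction e using Sym2.ind with
  | _ x y =>
    show Sym2.map _ (Sym2.map _ s(x, y)) = s(x, y)
    rw [Sym2.map_pair_eq, Sym2.map_pair_eq]
    simp [sub_sub_cancel]

lemma vcyc_addLeft {G : Type*} [AddCommGroup G] [Fintype G] (a : G) (k : ℕ) :
    vcyc (Equiv.addLeft a : Equiv.Perm G) k
      = if k = addOrderOf a then Fintype.card G / addOrderOf a else 0 := by
  rw [vcyc]
  split_ifs with h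
  · subst h
    congr 1
    rw [Finset.filter_true_of_mem (fun v _ => orbSize_addLeft a v), Finset.card_univ]
  · rw [Finset.filter_false_of_mem (fun v _ hv => h (by rw [← hv, orbSize_addLeft])),
      Finset.card_empty, Nat.zero_div]

lemma w_addLeft (hn : 3 ≤ n) [NeZero n] (a : Fin n) :
    w (cycG n) (Equiv.addLeft a : Equiv.Perm (Fin n)) =
      va (addOrderOf a) ^ (n / addOrderOf a) * vb (addOrderOf a) ^ (n / addOrderOf a) := by
  set d := addOrderOf a with hd
  have hddvd : d ∣ n := by
    have := addOrderOf_dvd_card (x := a)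
    rwa [Fintype.card_fin] at this
  have hdlt : d < Fintype.card (Fin n) * Fintype.card (Fin n) + 2 := by
    rw [Fintype.card_fin]
    have h1 : d ≤ n := Nat.le_of_dvd (by omega) hddvd
    have h2 : n ≤ n * n := Nat.le_mul_of_pos_left n (by omega)
    omega
  have hvc : ∀ k, vcyc (Equiv.addLeft a : Equiv.Perm (Fin n)) k
      = if k = d then n / d else 0 := by
    intro k
    rw [vcyc_addLeft, Fintype.card_fin]
  have heol : ∀ e ∈ eFin (cycG n), eOrbLen (Equiv.addLeft a : Equiv.Perm (Fin n)) e = d := by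
    intro e he
    rw [eFin_cyc hn] at he
    obtain ⟨i, -, rfl⟩ := Finset.mem_image.mp he
    rw [eOrbLen_eq _ (Equiv.addLeft a) _ (eIdx_inj hn) (edgePerm_addLeft a),
      orbSize_addLeft]
  have hpow := addLeft_pow_eq_one a
  have hcylE : ∀ e ∈ eFin (cycG n), IsCylE (Equiv.addLeft a : Equiv.Perm (Fin n)) e := by
    intro e he f hf u v hfuv
    rw [heol e he, hpow]
    simp
  have hmobE : ∀ e ∈ eFin (cycG n), ¬ IsMobE (Equiv.addLeft a : Equiv.Perm (Fin n)) e := by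
    intro e he hM
    rw [eFin_cyc hn] at he
    obtain ⟨i, -, rfl⟩ := Finset.mem_image.mp he
    obtain ⟨hne, h1, -⟩ := hM (eIdx i) ⟨0, by simp⟩ i (i + 1) rfl
    have h2 : eOrbLen (Equiv.addLeft a : Equiv.Perm (Fin n)) (eIdx i) = d := by
      rw [eOrbLen_eq _ (Equiv.addLeft a) _ (eIdx_inj hn) (edgePerm_addLeft a),
        orbSize_addLeft]
    rw [h2, hpow] at h1
    exact hne (by simpa using h1)
  have hcyl : ∀ k, cylCnt (cycG n) (Equiv.addLeft a : Equiv.Perm (Fin n)) k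
      = if k = d then n / d else 0 := by
    intro k
    rw [cylCnt]
    split_ifs with h
    · subst h
      congr 1
      rw [Finset.filter_true_of_mem (fun e he => ⟨heol e he, hcylE e he⟩), card_eFin hn]
    · rw [Finset.filter_false_of_mem (fun e he hc => h (by rw [← hc.1, heol e he])),
        Finset.card_empty, Nat.zero_div]
  have hmob : ∀ k, mobCnt (cycG n) (Equiv.addLeft a : Equiv.Perm (Fin n)) k = 0 := by
    intro k
    rw [mobCnt, Finset.filter_false_of_mem (fun e he hc => hmobE e he hc.2),
      Finset.card_empty, Nat.zero_div]
  rw [w, prodSingle (fun k => vcyc (Equiv.addLeft a : Equiv.Perm (Fin n)) k) va hdlt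
      (fun k hk => by show vcyc (Equiv.addLeft a : Equiv.Perm (Fin n)) k = 0
                      rw [hvc k, if_neg hk]),
    prodSingle (fun k => cylCnt (cycG n) (Equiv.addLeft a : Equiv.Perm (Fin n)) k) vb hdlt
      (fun k hk => by show cylCnt (cycG n) (Equiv.addLeft a : Equiv.Perm (Fin n)) k = 0
                      rw [hcyl k, if_neg hk]),
    prodOne _ vc hmob, mul_one]
  simp [hvc, hcyl]

end WalshAux2
section WalshAux3

open Finset

variable {n : ℕ}

lemma w_subLeft (hn : 3 ≤ n) (hodd : Odd n) [NeZero n] (a : Fin n) :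
    w (cycG n) (Equiv.subLeft a : Equiv.Perm (Fin n)) =
      va 1 * va 2 ^ ((n - 1) / 2) * vb 2 ^ ((n - 1) / 2) * vc 1 := by
  -- doubling is bijective
  have hinj : Function.Injective (fun x : Fin n => x + x) := by
    intro x y hxy
    simp only at hxy
    have h0 : (x - y) + (x - y) = 0 := by
      rw [show (x - y) + (x - y) = (x + x) - (y + y) from by abel, hxy, sub_self]
    have h2 : (2 : ℕ) • (x - y) = 0 := by rw [two_nsmul]; exact h0
    have hdvd2 : addOrderOf (x - y) ∣ 2 := addOrderOf_dvd_of_nsmul_eq_zero h2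
    have hdvdn : addOrderOf (x - y) ∣ n := by
      have := addOrderOf_dvd_card (x := x - y)
      rwa [Fintype.card_fin] at this
    have h1 : addOrderOf (x - y) = 1 := by
      rcases (Nat.dvd_prime Nat.prime_two).mp hdvd2 with h | h
      · exact h
      · exfalso
        rw [h] at hdvdn
        exact (fun he => (Nat.not_even_iff_odd.mpr hodd) he) (even_iff_two_dvd.mpr hdvdn)
    have := AddMonoid.addOrderOf_eq_one_iff.mp h1
    exact sub_eq_zero.mp this
  have hbij : Function.Bijective (fun x : Fin n => x + x) :=
    Finite.injective_iff_bijective.mp hinj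
  -- fixed point structure of a reflection
  have hfixgen : ∀ b y : Fin n, y + y = b →
      ∀ v : Fin n, ((Equiv.subLeft b : Equiv.Perm (Fin n)) v = v ↔ v = y) := by
    intro b y hy v
    constructor
    · intro hv
      rw [Equiv.subLeft_apply] at hv
      have hb : b = v + v := sub_eq_iff_eq_add.mp hv
      apply hinj
      show v + v = y + y
      rw [hy, ← hb]
    · intro hv
      subst hv
      rw [Equiv.subLeft_apply, ← hy]
      abel
  obtain ⟨y0, hy0⟩ := hbij.surjective a
  simp only at hy0
  obtain ⟨x0, hx0⟩ := hbij.surjective (a - 1)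
  simp only at hx0
  have hinvol := subLeft_invol (G := Fin n) a
  have hinvol' := subLeft_invol (G := Fin n) (a - 1)
  have hσ2 : (Equiv.subLeft a : Equiv.Perm (Fin n)) ^ 2 = 1 := by
    rw [pow_two]; exact hinvol
  -- orbit sizes on vertices
  have horb : ∀ v : Fin n, orbSize (Equiv.subLeft a : Equiv.Perm (Fin n)) v
      = if v = y0 then 1 else 2 := by
    intro v
    rw [wcOrbSizeInvol _ hinvol v]
    by_cases h : v = y0
    · rw [if_pos ((hfixgen a y0 hy0 v).mpr h), if_pos h]
    · rw [if_neg (fun hh => h ((hfixgen a y0 hy0 v).mp hh)), if_neg h]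
  -- vertex cycle counts
  have hvc1 : vcyc (Equiv.subLeft a : Equiv.Perm (Fin n)) 1 = 1 := by
    rw [vcyc, Nat.div_one, filterCardEq _ _ {y0} (fun v => by
      rw [Finset.mem_singleton, horb v]
      by_cases h : v = y0 <;> simp [h]), Finset.card_singleton]
  have hvc2 : vcyc (Equiv.subLeft a : Equiv.Perm (Fin n)) 2 = (n - 1) / 2 := by
    rw [vcyc, filterCardEq _ _ (Finset.univ.erase y0) (fun v => by
      rw [Finset.mem_erase, horb v]
      by_cases h : v = y0 <;> simp [h]),
      Finset.card_erase_of_mem (Finset.mem_univ y0), Finset.card_univ, Fintype.card_fin]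
  have hvck : ∀ k, k ≠ 1 → k ≠ 2 → vcyc (Equiv.subLeft a : Equiv.Perm (Fin n)) k = 0 := by
    intro k hk1 hk2
    rw [vcyc, filterCardEq _ _ ∅ (fun v => by
      simp only [Finset.notMem_empty, Finset.mem_univ, true_and, false_iff]
      rw [horb v]
      split_ifs <;> omega), Finset.card_empty, Nat.zero_div]
  -- edge orbit lengths
  have heol : ∀ i : Fin n, eOrbLen (Equiv.subLeft a : Equiv.Perm (Fin n)) (eIdx i)
      = if i = x0 then 1 else 2 := by
    intro i
    rw [eOrbLen_eq _ (Equiv.subLeft (a - 1)) _ (eIdx_inj hn) (edgePerm_subLeft a),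
      wcOrbSizeInvol _ hinvol' i]
    by_cases h : i = x0
    · rw [if_pos ((hfixgen (a - 1) x0 hx0 i).mpr h), if_pos h]
    · rw [if_neg (fun hh => h ((hfixgen (a - 1) x0 hx0 i).mp hh)), if_neg h]
  -- the special edge
  have ha : x0 + (x0 + 1) = a := by
    rw [← add_assoc, hx0, sub_add_cancel]
  have hσx0 : (Equiv.subLeft a : Equiv.Perm (Fin n)) x0 = x0 + 1 := by
    rw [Equiv.subLeft_apply, ← ha]; abel
  have hσx0' : (Equiv.subLeft a : Equiv.Perm (Fin n)) (x0 + 1) = x0 := by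
    rw [Equiv.subLeft_apply, ← ha]; abel
  have hepfix : edgePerm (Equiv.subLeft a : Equiv.Perm (Fin n)) (eIdx x0) = eIdx x0 := by
    rw [edgePerm_subLeft, (hfixgen (a - 1) x0 hx0 x0).mpr rfl]
  have hmob_e0 : IsMobE (Equiv.subLeft a : Equiv.Perm (Fin n)) (eIdx x0) := by
    intro f hf u v hfuv
    have hf' : f = eIdx x0 := by
      rcases (wcInvolSameCycle (edgePerm (Equiv.subLeft a : Equiv.Perm (Fin n)))
        (edgePerm_subLeft_invol a) (eIdx x0) f).mp hf with h | h
      · exact h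
      · rw [h, hepfix]
    rw [hf', eIdx, Sym2.eq_iff] at hfuv
    rw [heol x0, if_pos rfl, pow_one]
    rcases hfuv with ⟨h1, h2⟩ | ⟨h1, h2⟩
    · rw [← h1, ← h2]
      exact ⟨finNeAddOne hn x0, hσx0, hσx0'⟩
    · rw [← h1, ← h2]
      exact ⟨(finNeAddOne hn x0).symm ∘ Eq.symm ∘ Eq.symm, hσx0', hσx0⟩
  have hncyl_e0 : ¬ IsCylE (Equiv.subLeft a : Equiv.Perm (Fin n)) (eIdx x0) := by
    intro h
    obtain ⟨h1, -⟩ := h (eIdx x0) ⟨0, by simp⟩ x0 (x0 + 1) rfl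
    rw [heol x0, if_pos rfl, pow_one, hσx0] at h1
    exact finNeAddOne hn x0 h1.symm
  have hcyl_i : ∀ i : Fin n, i ≠ x0 → IsCylE (Equiv.subLeft a : Equiv.Perm (Fin n)) (eIdx i) := by
    intro i hi f hf u v hfuv
    rw [heol i, if_neg hi, hσ2]
    simp
  have hnmob_i : ∀ i : Fin n, i ≠ x0 → ¬ IsMobE (Equiv.subLeft a : Equiv.Perm (Fin n)) (eIdx i) := by
    intro i hi h
    obtain ⟨hne, h1, -⟩ := h (eIdx i) ⟨0, by simp⟩ i (i + 1) rfl
    rw [heol i, if_neg hi, hσ2] at h1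
    exact hne (by simpa using h1)
  -- edge cycle counts
  have hcc2 : cylCnt (cycG n) (Equiv.subLeft a : Equiv.Perm (Fin n)) 2 = (n - 1) / 2 := by
    rw [cylCnt, filterCardEq _ _ ((Finset.univ.erase x0).image eIdx) (fun e => by
      constructor
      · intro he
        obtain ⟨i, hi, rfl⟩ := Finset.mem_image.mp he
        have hix0 : i ≠ x0 := (Finset.mem_erase.mp hi).1
        exact ⟨by rw [eFin_cyc hn]; exact Finset.mem_image_of_mem _ (Finset.mem_univ i),
          by rw [heol i, if_neg hix0], hcyl_i i hix0⟩
      · rintro ⟨he, hlen, hcyl⟩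
        rw [eFin_cyc hn] at he
        obtain ⟨i, -, rfl⟩ := Finset.mem_image.mp he
        have hix0 : i ≠ x0 := by
          intro hh
          subst hh
          rw [heol i, if_pos rfl] at hlen
          omega
        exact Finset.mem_image_of_mem _ (Finset.mem_erase.mpr ⟨hix0, Finset.mem_univ i⟩)),
      Finset.card_image_of_injective _ (eIdx_inj hn),
      Finset.card_erase_of_mem (Finset.mem_univ x0), Finset.card_univ, Fintype.card_fin]
  have hmc1 : mobCnt (cycG n) (Equiv.subLeft a : Equiv.Perm (Fin n)) 1 = 1 := by
    rw [mobCnt, Nat.div_one, filterCardEq _ _ {eIdx x0} (fun e => by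
      constructor
      · intro he
        rw [Finset.mem_singleton] at he
        subst he
        exact ⟨by rw [eFin_cyc hn]; exact Finset.mem_image_of_mem _ (Finset.mem_univ x0),
          by rw [heol x0, if_pos rfl], hmob_e0⟩
      · rintro ⟨he, hlen, hmob⟩
        rw [eFin_cyc hn] at he
        obtain ⟨i, -, rfl⟩ := Finset.mem_image.mp he
        rw [Finset.mem_singleton]
        by_cases hix0 : i = x0
        · rw [hix0]
        · exact absurd hmob (hnmob_i i hix0)), Finset.card_singleton]
  have hcc1 : cylCnt (cycG n) (Equiv.subLeft a : Equiv.Perm (Fin n)) 1 = 0 := by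
    rw [cylCnt, filterCardEq _ _ ∅ (fun e => by
      simp only [Finset.notMem_empty, false_iff]
      rintro ⟨he, hlen, hcyl⟩
      rw [eFin_cyc hn] at he
      obtain ⟨i, -, rfl⟩ := Finset.mem_image.mp he
      by_cases hix0 : i = x0
      · subst hix0
        exact hncyl_e0 hcyl
      · rw [heol i, if_neg hix0] at hlen
        omega), Finset.card_empty, Nat.zero_div]
  have hmck : ∀ k, k ≠ 1 → mobCnt (cycG n) (Equiv.subLeft a : Equiv.Perm (Fin n)) k = 0 := by
    intro k hk
    rw [mobCnt, filterCardEq _ _ ∅ (fun e => by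
      simp only [Finset.notMem_empty, false_iff]
      rintro ⟨he, hlen, hmob⟩
      rw [eFin_cyc hn] at he
      obtain ⟨i, -, rfl⟩ := Finset.mem_image.mp he
      by_cases hix0 : i = x0
      · rw [hix0, heol x0, if_pos rfl] at hlen
        omega
      · exact hnmob_i i hix0 hmob), Finset.card_empty, Nat.zero_div]
  have hcck : ∀ k, k ≠ 1 → k ≠ 2 → cylCnt (cycG n) (Equiv.subLeft a : Equiv.Perm (Fin n)) k = 0 := by
    intro k hk1 hk2
    rw [cylCnt, filterCardEq _ _ ∅ (fun e => by
      simp only [Finset.notMem_empty, false_iff]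
      rintro ⟨he, hlen, hcyl⟩
      rw [eFin_cyc hn] at he
      obtain ⟨i, -, rfl⟩ := Finset.mem_image.mp he
      rw [heol i] at hlen
      split_ifs at hlen <;> omega), Finset.card_empty, Nat.zero_div]
  -- assemble
  have hN : 3 ≤ Fintype.card (Fin n) * Fintype.card (Fin n) + 2 := by
    rw [Fintype.card_fin]; nlinarith
  have h2lt : 2 < Fintype.card (Fin n) * Fintype.card (Fin n) + 2 := by omega
  have h1lt : 1 < Fintype.card (Fin n) * Fintype.card (Fin n) + 2 := by omega
  rw [w, prodPair (fun k => vcyc (Equiv.subLeft a : Equiv.Perm (Fin n)) k) va hN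
      (fun k hk1 hk2 => by
        show vcyc (Equiv.subLeft a : Equiv.Perm (Fin n)) k = 0
        exact hvck k hk1 hk2),
    prodSingle (fun k => cylCnt (cycG n) (Equiv.subLeft a : Equiv.Perm (Fin n)) k) vb h2lt
      (fun k hk => by
        show cylCnt (cycG n) (Equiv.subLeft a : Equiv.Perm (Fin n)) k = 0
        by_cases h1 : k = 1
        · subst h1; exact hcc1
        · exact hcck k h1 hk),
    prodSingle (fun k => mobCnt (cycG n) (Equiv.subLeft a : Equiv.Perm (Fin n)) k) vc h1lt
      (fun k hk => by
        show mobCnt (cycG n) (Equiv.subLeft a : Equiv.Perm (Fin n)) k = 0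
        exact hmck k hk)]
  simp only [hvc1, hvc2, hcc2, hmc1, pow_one]

end WalshAux3
/-- the Walsh cycle index sum of the cycle `C_n` for odd `n ≥ 3`. -/
theorem walsh_cycle_odd (n : ℕ) (hn : 3 ≤ n) (hodd : Odd n) :
    ∑ σ ∈ autF (cycG n), w (cycG n) σ =
      (∑ d ∈ n.divisors, (d.totient : WRing) * va d ^ (n / d) * vb d ^ (n / d)) +
        (n : WRing) * va 1 * va 2 ^ ((n - 1) / 2) * vb 2 ^ ((n - 1) / 2) * vc 1 := by
  haveI : NeZero n := ⟨by omega⟩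
  haveI hcyc : IsAddCyclic (Fin n) := by
    refine ⟨1, fun x => ⟨(x.val : ℤ), ?_⟩⟩
    show (x.val : ℤ) • (1 : Fin n) = x
    rw [natCast_zsmul]
    have h1 : (x.val) • (1 : Fin n) = ((x.val : ℕ) : Fin n) := by simp [nsmul_eq_mul]
    rw [h1, Fin.cast_val_eq_self]
  have hdisj : Disjoint
      (Finset.univ.image fun a : Fin n => (Equiv.addLeft a : Equiv.Perm (Fin n)))
      (Finset.univ.image fun a : Fin n => (Equiv.subLeft a : Equiv.Perm (Fin n))) := by
    rw [Finset.disjoint_left]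
    rintro σ h1 h2
    obtain ⟨x, -, hx⟩ := Finset.mem_image.mp h1
    obtain ⟨y, -, hy⟩ := Finset.mem_image.mp h2
    have h0 : x = y := by
      have := congrArg (fun e : Equiv.Perm (Fin n) => e 0) (hx.trans hy.symm)
      simpa using this
    have h1' : x + 1 = y - 1 := by
      have := congrArg (fun e : Equiv.Perm (Fin n) => e 1) (hx.trans hy.symm)
      simpa using this
    rw [← h0] at h1'
    have h2' : x + (1 + 1) = x + 0 := by
      rw [← add_assoc, add_zero, h1', sub_add_cancel]
    have h3 := add_left_cancel h2'
    rw [one_add_one_eq_two] at h3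
    exact finTwo hn h3
  rw [autF_cyc hn, Finset.sum_union hdisj,
    Finset.sum_image (fun x _ y _ h => by
      have := congrArg (fun e : Equiv.Perm (Fin n) => e 0) h
      simpa using this),
    Finset.sum_image (fun x _ y _ h => by
      have := congrArg (fun e : Equiv.Perm (Fin n) => e 0) h
      simpa using this)]
  congr 1
  · rw [Finset.sum_congr rfl (fun a _ => w_addLeft hn a)]
    rw [← Finset.sum_fiberwise_of_maps_to (g := fun a : Fin n => addOrderOf a)
      (t := n.divisors)
      (fun a _ => Nat.mem_divisors.mpr ⟨by
        have := addOrderOf_dvd_card (x := a)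
        rwa [Fintype.card_fin] at this, by omega⟩)]
    refine Finset.sum_congr rfl (fun d hd => ?_)
    rw [Finset.sum_congr rfl (fun a ha => by
        rw [(Finset.mem_filter.mp ha).2]), Finset.sum_const]
    have hcard : (Finset.univ.filter fun a : Fin n => addOrderOf a = d).card = d.totient := by
      have hdvd : d ∣ Fintype.card (Fin n) := by
        rw [Fintype.card_fin]
        exact (Nat.mem_divisors.mp hd).1
      exact IsAddCyclic.card_addOrderOf_eq_totient hdvd
    rw [hcard, nsmul_eq_mul]
    ring
  · rw [Finset.sum_congr rfl (fun a _ => w_subLeft hn hodd a), Finset.sum_const,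
      Finset.card_univ, Fintype.card_fin, nsmul_eq_mul]
    ring
end
end

section
/- Let σ be a permutation of the vertex set [n] = {1,…,n} with n_i cycles of length i, and let K_n be the complete graph on [n]. Then the sum, over all simple graphs G on the vertex set [n] such that σ is an automorphism of G, of the cycle index monomials w(G,σ) equals ∏_i a_i^{n_i} · ∏_k (1 + b_k)^{cyl_k(K_n,σ)} · ∏_k (1 + c_k)^{möb_k(K_n,σ)}. -/
open scoped Classical

noncomputable section

namespace WalshAux

open Finset Equiv Equiv.Perm

set_option linter.unusedSectionVars false

variable {V : Type*} [Fintype V] (σ : Equiv.Perm V)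

lemma edgePerm_mk (u v : V) : edgePerm σ s(u, v) = s(σ u, σ v) := rfl

lemma edgePerm_pow_mk (m : ℕ) (u v : V) :
    (edgePerm σ ^ m) s(u, v) = s((σ ^ m) u, (σ ^ m) v) := by
  induction m with
  | zero => simp
  | succ m ih =>
    rw [pow_succ', pow_succ', Equiv.Perm.mul_apply, Equiv.Perm.mul_apply,
      Equiv.Perm.mul_apply, ih, edgePerm_mk]

lemma edgePerm_isDiag (e : Sym2 V) : (edgePerm σ e).IsDiag ↔ e.IsDiag := by
  induction e using Sym2.ind with
  | _ u v => rw [edgePerm_mk]; simp [Sym2.mk_isDiag_iff, σ.injective.eq_iff]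

lemma pow_isDiag (m : ℕ) (e : Sym2 V) : ((edgePerm σ ^ m) e).IsDiag ↔ e.IsDiag := by
  induction m with
  | zero => simp
  | succ m ih => rw [pow_succ', Equiv.Perm.mul_apply, edgePerm_isDiag, ih]

lemma sameCycle_isDiag {e f : Sym2 V} (h : (edgePerm σ).SameCycle e f) :
    f.IsDiag ↔ e.IsDiag := by
  obtain ⟨i, -, rfl⟩ := h.exists_pow_eq'
  exact pow_isDiag σ i e

lemma mem_E {e : Sym2 V} : e ∈ eFin (⊤ : SimpleGraph V) ↔ ¬ e.IsDiag := by
  simp [eFin, SimpleGraph.mem_edgeFinset, SimpleGraph.edgeSet_top]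

lemma eFin_subset_top {G : SimpleGraph V} {e : Sym2 V} (he : e ∈ eFin G) :
    e ∈ eFin (⊤ : SimpleGraph V) := by
  rw [mem_E]
  unfold eFin at he
  rw [SimpleGraph.mem_edgeFinset] at he
  exact G.not_isDiag_of_mem_edgeSet he

lemma eFin_inj {G₁ G₂ : SimpleGraph V} (h : eFin G₁ = eFin G₂) : G₁ = G₂ := by
  have hm : ∀ e, e ∈ eFin G₁ ↔ e ∈ eFin G₂ := fun e => by rw [h]
  unfold eFin at hm
  simp only [SimpleGraph.mem_edgeFinset] at hm
  exact SimpleGraph.edgeSet_inj.mp (Set.ext hm)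

/-- The orbit of `e` under the edge permutation. -/
def orb (e : Sym2 V) : Finset (Sym2 V) :=
  Finset.univ.filter fun f => (edgePerm σ).SameCycle e f

lemma mem_orb {e f : Sym2 V} : f ∈ orb σ e ↔ (edgePerm σ).SameCycle e f := by
  simp [orb]

lemma eOrbLen_eq (e : Sym2 V) : eOrbLen σ e = (orb σ e).card := rfl

lemma orb_eq {e f : Sym2 V} (h : (edgePerm σ).SameCycle e f) : orb σ e = orb σ f := by
  ext g
  simp only [mem_orb]
  exact ⟨fun hg => h.symm.trans hg, fun hg => h.trans hg⟩

lemma eOrbLen_congr {e f : Sym2 V} (h : (edgePerm σ).SameCycle e f) :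
    eOrbLen σ e = eOrbLen σ f := by
  rw [eOrbLen_eq, eOrbLen_eq, orb_eq σ h]

lemma eOrbLen_pos (e : Sym2 V) : 0 < eOrbLen σ e := by
  rw [eOrbLen_eq]
  exact Finset.card_pos.2 ⟨e, (mem_orb σ).2 (Equiv.Perm.SameCycle.refl _ _)⟩

lemma pow_eOrbLen_self (e : Sym2 V) : (edgePerm σ ^ eOrbLen σ e) e = e := by
  by_cases h : edgePerm σ e = e
  · have horb : orb σ e = {e} := by
      ext f
      simp only [mem_orb, Finset.mem_singleton]
      constructor
      · intro hf
        obtain ⟨i, -, rfl⟩ := hf.exists_pow_eq'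
        exact Equiv.Perm.pow_apply_eq_self_of_apply_eq_self h i
      · rintro rfl; exact Equiv.Perm.SameCycle.refl _ _
    have h1 : eOrbLen σ e = 1 := by rw [eOrbLen_eq, horb, Finset.card_singleton]
    rw [h1, pow_one, h]
  · have hcyc := Equiv.Perm.isCycle_cycleOf (edgePerm σ) h
    have hsupp : ((edgePerm σ).cycleOf e).support = orb σ e := by
      ext f
      rw [Equiv.Perm.mem_support_cycleOf_iff, mem_orb]
      simp [Equiv.Perm.mem_support, h]
    have hord : orderOf ((edgePerm σ).cycleOf e) = eOrbLen σ e := by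
      rw [hcyc.orderOf, hsupp, eOrbLen_eq]
    calc (edgePerm σ ^ eOrbLen σ e) e
        = (((edgePerm σ).cycleOf e) ^ eOrbLen σ e) e :=
          ((edgePerm σ).cycleOf_pow_apply_self e _).symm
      _ = e := by rw [← hord, pow_orderOf_eq_one]; rfl

lemma pow_eOrbLen_fix {e f : Sym2 V} (h : (edgePerm σ).SameCycle e f) :
    (edgePerm σ ^ eOrbLen σ e) f = f := by
  obtain ⟨i, -, rfl⟩ := h.exists_pow_eq'
  rw [← Equiv.Perm.mul_apply, ← pow_add, add_comm, pow_add, Equiv.Perm.mul_apply,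
    pow_eOrbLen_self]

lemma pow_comm_apply (a b : ℕ) (x : V) : (σ ^ a) ((σ ^ b) x) = (σ ^ b) ((σ ^ a) x) := by
  rw [← Equiv.Perm.mul_apply, ← Equiv.Perm.mul_apply, pow_mul_comm]

lemma cyl_or_mob {e : Sym2 V} (he : ¬ e.IsDiag) : IsCylE σ e ∨ IsMobE σ e := by
  induction e using Sym2.ind with
  | _ u₀ v₀ =>
  rw [Sym2.mk_isDiag_iff] at he
  have key : (edgePerm σ ^ eOrbLen σ s(u₀, v₀)) s(u₀, v₀) = s(u₀, v₀) :=
    pow_eOrbLen_self σ _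
  rw [edgePerm_pow_mk, Sym2.eq_iff] at key
  have hrep : ∀ f : Sym2 V, (edgePerm σ).SameCycle s(u₀, v₀) f → ∀ u v : V, f = s(u, v) →
      ∃ i : ℕ, ((σ ^ i) u₀ = u ∧ (σ ^ i) v₀ = v) ∨ ((σ ^ i) u₀ = v ∧ (σ ^ i) v₀ = u) := by
    intro f hf u v hfe
    obtain ⟨i, -, hi⟩ := hf.exists_pow_eq'
    rw [edgePerm_pow_mk, hfe, Sym2.eq_iff] at hi
    exact ⟨i, hi⟩
  rcases key with ⟨hu, hv⟩ | ⟨hu, hv⟩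
  · left
    intro f hf u v hfe
    obtain ⟨i, hi⟩ := hrep f hf u v hfe
    rcases hi with ⟨h1, h2⟩ | ⟨h1, h2⟩
    · exact ⟨by rw [← h1, pow_comm_apply, hu], by rw [← h2, pow_comm_apply, hv]⟩
    · exact ⟨by rw [← h2, pow_comm_apply, hv], by rw [← h1, pow_comm_apply, hu]⟩
  · right
    intro f hf u v hfe
    obtain ⟨i, hi⟩ := hrep f hf u v hfe
    rcases hi with ⟨h1, h2⟩ | ⟨h1, h2⟩
    · refine ⟨?_, ?_, ?_⟩
      · rw [← h1, ← h2]
        exact fun hh => he (Equiv.injective _ hh)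
      · rw [← h1, pow_comm_apply, hu, h2]
      · rw [← h2, pow_comm_apply, hv, h1]
    · refine ⟨?_, ?_, ?_⟩
      · rw [← h1, ← h2]
        exact fun hh => he (Equiv.injective _ hh).symm
      · rw [← h2, pow_comm_apply, hv, h1]
      · rw [← h1, pow_comm_apply, hu, h2]

lemma not_cyl_and_mob {e : Sym2 V} (he : ¬ e.IsDiag) : ¬ (IsCylE σ e ∧ IsMobE σ e) := by
  induction e using Sym2.ind with
  | _ u v =>
  rw [Sym2.mk_isDiag_iff] at he
  rintro ⟨hc, hm⟩
  obtain ⟨hne, h1, -⟩ := hm s(u, v) (Equiv.Perm.SameCycle.refl _ _) u v rfl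
  obtain ⟨h3, -⟩ := hc s(u, v) (Equiv.Perm.SameCycle.refl _ _) u v rfl
  exact hne (h3.symm.trans h1)

lemma IsCylE.of_sameCycle {e f : Sym2 V} (h : (edgePerm σ).SameCycle e f)
    (H : IsCylE σ e) : IsCylE σ f := by
  intro g hg u v hguv
  rw [← eOrbLen_congr σ h]
  exact H g (h.trans hg) u v hguv

lemma IsMobE.of_sameCycle {e f : Sym2 V} (h : (edgePerm σ).SameCycle e f)
    (H : IsMobE σ e) : IsMobE σ f := by
  intro g hg u v hguv
  rw [← eOrbLen_congr σ h]
  exact H g (h.trans hg) u v hguv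

/-- The setoid of the same-cycle relation of the edge permutation. -/
def csetoid : Setoid (Sym2 V) :=
  ⟨(edgePerm σ).SameCycle,
    ⟨Equiv.Perm.SameCycle.refl _, Equiv.Perm.SameCycle.symm, Equiv.Perm.SameCycle.trans⟩⟩

/-- A canonical representative of the edge cycle through `e`. -/
noncomputable def rep (e : Sym2 V) : Sym2 V := (Quotient.mk (csetoid σ) e).out

lemma sameCycle_rep (e : Sym2 V) : (edgePerm σ).SameCycle e (rep σ e) :=
  Equiv.Perm.SameCycle.symm (Quotient.exact (Quotient.out_eq (Quotient.mk (csetoid σ) e)))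

lemma rep_congr {e f : Sym2 V} (h : (edgePerm σ).SameCycle e f) : rep σ e = rep σ f :=
  congrArg Quotient.out (Quotient.sound h)

lemma rep_rep (e : Sym2 V) : rep σ (rep σ e) = rep σ e :=
  (rep_congr σ (sameCycle_rep σ e)).symm

lemma rep_mem_E {e : Sym2 V} (he : e ∈ eFin (⊤ : SimpleGraph V)) :
    rep σ e ∈ eFin (⊤ : SimpleGraph V) := by
  rw [mem_E] at he ⊢
  exact fun hd => he ((sameCycle_isDiag σ (sameCycle_rep σ e)).1 hd)

/-- The set of canonical representatives of edge cycles. -/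
noncomputable def RR : Finset (Sym2 V) :=
  (eFin (⊤ : SimpleGraph V)).filter fun e => rep σ e = e

/-- The graph whose edges are the cycles with representatives in `T`. -/
noncomputable def gr (T : Finset (Sym2 V)) : SimpleGraph V :=
  SimpleGraph.fromEdgeSet ↑((eFin (⊤ : SimpleGraph V)).filter fun e => rep σ e ∈ T)

lemma eFin_gr (T : Finset (Sym2 V)) :
    eFin (gr σ T) = (eFin (⊤ : SimpleGraph V)).filter fun e => rep σ e ∈ T := by
  ext e
  simp only [eFin, SimpleGraph.mem_edgeFinset]
  simp only [gr, SimpleGraph.edgeSet_fromEdgeSet,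
    Set.mem_diff, Finset.mem_coe, Set.mem_setOf_eq, Finset.mem_filter]
  constructor
  · rintro ⟨h, -⟩
    exact h
  · intro h
    refine ⟨h, ?_⟩
    have h1 := h.1
    replace h1 := mem_E.1 h1
    exact h1

lemma sameCycle_apply_self (e : Sym2 V) : (edgePerm σ).SameCycle e (edgePerm σ e) :=
  Equiv.Perm.sameCycle_apply_right.2 (Equiv.Perm.SameCycle.refl _ _)

lemma gr_auto (T : Finset (Sym2 V)) :
    ∀ u v : V, (gr σ T).Adj (σ u) (σ v) ↔ (gr σ T).Adj u v := by
  intro u v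
  rw [gr, SimpleGraph.fromEdgeSet_adj, SimpleGraph.fromEdgeSet_adj]
  have hmk : s(σ u, σ v) = edgePerm σ s(u, v) := rfl
  rw [hmk, Finset.mem_coe, Finset.mem_coe, Finset.mem_filter, Finset.mem_filter, mem_E, mem_E,
    edgePerm_isDiag, ← rep_congr σ (sameCycle_apply_self σ s(u, v))]
  simp [σ.injective.ne_iff]

lemma mem_edge_tau {G : SimpleGraph V} (hG : ∀ u v : V, G.Adj (σ u) (σ v) ↔ G.Adj u v)
    (e : Sym2 V) : edgePerm σ e ∈ eFin G ↔ e ∈ eFin G := by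
  induction e using Sym2.ind with
  | _ u v =>
    rw [edgePerm_mk]
    simp only [eFin, SimpleGraph.mem_edgeFinset, SimpleGraph.mem_edgeSet]
    exact hG u v

lemma mem_edge_pow {G : SimpleGraph V} (hG : ∀ u v : V, G.Adj (σ u) (σ v) ↔ G.Adj u v)
    (m : ℕ) (e : Sym2 V) : (edgePerm σ ^ m) e ∈ eFin G ↔ e ∈ eFin G := by
  induction m with
  | zero => simp
  | succ m ih => rw [pow_succ', Equiv.Perm.mul_apply, mem_edge_tau σ hG, ih]

lemma mem_edge_congr {G : SimpleGraph V} (hG : ∀ u v : V, G.Adj (σ u) (σ v) ↔ G.Adj u v)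
    {e f : Sym2 V} (h : (edgePerm σ).SameCycle e f) : e ∈ eFin G ↔ f ∈ eFin G := by
  obtain ⟨i, -, rfl⟩ := h.exists_pow_eq'
  exact (mem_edge_pow σ hG i e).symm

/-- The set of cycle representatives of the edges of `G`. -/
noncomputable def tset (G : SimpleGraph V) : Finset (Sym2 V) :=
  (eFin G).filter fun e => rep σ e = e

lemma tG_mem (G : SimpleGraph V) : tset σ G ∈ (RR σ).powerset := by
  rw [tset, Finset.mem_powerset]
  intro e he
  rw [Finset.mem_filter] at he
  rw [RR, Finset.mem_filter]
  exact ⟨eFin_subset_top he.1, he.2⟩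

lemma gr_tG {G : SimpleGraph V} (hG : ∀ u v : V, G.Adj (σ u) (σ v) ↔ G.Adj u v) :
    gr σ (tset σ G) = G := by
  have h2 : eFin (gr σ (tset σ G)) = eFin G := by
    rw [eFin_gr]
    simp only [tset]
    ext e
    simp only [Finset.mem_filter]
    constructor
    · rintro ⟨-, hrep, -⟩
      exact (mem_edge_congr σ hG (sameCycle_rep σ e)).2 hrep
    · intro he
      exact ⟨eFin_subset_top he,
        (mem_edge_congr σ hG (sameCycle_rep σ e)).1 he, rep_rep σ e⟩
  exact eFin_inj h2

lemma tG_gr {T : Finset (Sym2 V)} (hT : T ∈ (RR σ).powerset) :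
    tset σ (gr σ T) = T := by
  rw [Finset.mem_powerset] at hT
  rw [tset, eFin_gr]
  ext e
  simp only [Finset.filter_filter, Finset.mem_filter]
  constructor
  · rintro ⟨-, hrT, hre⟩
    rwa [hre] at hrT
  · intro he
    have heR := hT he
    rw [RR, Finset.mem_filter] at heR
    exact ⟨heR.1, heR.2.symm ▸ he, heR.2⟩

lemma count_lemma (T : Finset (Sym2 V)) (hT : T ⊆ RR σ) (P : Sym2 V → Prop)
    (hP : ∀ {e f : Sym2 V}, (edgePerm σ).SameCycle e f → P e → P f) (k : ℕ) :
    (((eFin (⊤ : SimpleGraph V)).filter fun e => rep σ e ∈ T).filter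
        fun e => eOrbLen σ e = k ∧ P e).card
      = k * (T.filter fun t => eOrbLen σ t = k ∧ P t).card := by
  have hset : ((eFin (⊤ : SimpleGraph V)).filter fun e => rep σ e ∈ T).filter
        (fun e => eOrbLen σ e = k ∧ P e)
      = (T.filter fun t => eOrbLen σ t = k ∧ P t).biUnion (orb σ) := by
    ext e
    simp only [Finset.mem_filter, Finset.mem_biUnion, mem_orb]
    constructor
    · rintro ⟨⟨heE, hrT⟩, hlen, hPe⟩
      refine ⟨rep σ e, ⟨hrT, ?_, hP (sameCycle_rep σ e) hPe⟩, (sameCycle_rep σ e).symm⟩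
      rw [← eOrbLen_congr σ (sameCycle_rep σ e)]
      exact hlen
    · rintro ⟨t, ⟨htT, htlen, htP⟩, hte⟩
      have htR := hT htT
      rw [RR, Finset.mem_filter] at htR
      refine ⟨⟨?_, ?_⟩, ?_, hP hte htP⟩
      · rw [mem_E]
        intro hd
        exact mem_E.1 htR.1 ((sameCycle_isDiag σ hte).1 hd)
      · rw [← rep_congr σ hte, htR.2]
        exact htT
      · rw [← eOrbLen_congr σ hte]
        exact htlen
  rw [hset, Finset.card_biUnion]
  · have hcards : ∀ t ∈ T.filter (fun t => eOrbLen σ t = k ∧ P t), (orb σ t).card = k := by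
      intro t ht
      rw [← eOrbLen_eq]
      exact (Finset.mem_filter.1 ht).2.1
    rw [Finset.sum_congr rfl hcards, Finset.sum_const, smul_eq_mul, mul_comm]
  · intro t1 h1 t2 h2 hne
    rw [Function.onFun, Finset.disjoint_left]
    intro e he1 he2
    apply hne
    have hc1 := (mem_orb σ).1 he1
    have hc2 := (mem_orb σ).1 he2
    have r1 := hT (Finset.mem_filter.1 h1).1
    have r2 := hT (Finset.mem_filter.1 h2).1
    rw [RR, Finset.mem_filter] at r1 r2
    calc t1 = rep σ t1 := r1.2.symm
      _ = rep σ e := rep_congr σ hc1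
      _ = rep σ t2 := (rep_congr σ hc2).symm
      _ = t2 := r2.2

lemma cylCnt_gr (T : Finset (Sym2 V)) (hT : T ⊆ RR σ) (k : ℕ) :
    cylCnt (gr σ T) σ k = (T.filter fun t => eOrbLen σ t = k ∧ IsCylE σ t).card := by
  simp only [cylCnt]
  rw [eFin_gr, count_lemma σ T hT _ (fun h hp => IsCylE.of_sameCycle σ h hp) k]
  rcases Nat.eq_zero_or_pos k with rfl | hk
  · rw [Nat.zero_mul, Nat.zero_div]
    symm
    rw [Finset.card_eq_zero, Finset.filter_eq_empty_iff]
    rintro t - ⟨h0, -⟩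
    exact (eOrbLen_pos σ t).ne' h0
  · exact Nat.mul_div_cancel_left _ hk

lemma mobCnt_gr (T : Finset (Sym2 V)) (hT : T ⊆ RR σ) (k : ℕ) :
    mobCnt (gr σ T) σ k = (T.filter fun t => eOrbLen σ t = k ∧ IsMobE σ t).card := by
  simp only [mobCnt]
  rw [eFin_gr, count_lemma σ T hT _ (fun h hp => IsMobE.of_sameCycle σ h hp) k]
  rcases Nat.eq_zero_or_pos k with rfl | hk
  · rw [Nat.zero_mul, Nat.zero_div]
    symm
    rw [Finset.card_eq_zero, Finset.filter_eq_empty_iff]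
    rintro t - ⟨h0, -⟩
    exact (eOrbLen_pos σ t).ne' h0
  · exact Nat.mul_div_cancel_left _ hk

lemma gr_RR : gr σ (RR σ) = (⊤ : SimpleGraph V) := by
  have h2 : eFin (gr σ (RR σ)) = eFin (⊤ : SimpleGraph V) := by
    rw [eFin_gr]
    ext e
    simp only [Finset.mem_filter]
    constructor
    · exact fun h => h.1
    · intro he
      refine ⟨he, ?_⟩
      rw [RR, Finset.mem_filter]
      exact ⟨rep_mem_E σ he, rep_rep σ e⟩
  exact eFin_inj h2

lemma regroup (S : Finset (Sym2 V)) (P : Sym2 V → Prop) (y : ℕ → WRing) (N : ℕ)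
    (h : ∀ t ∈ S, eOrbLen σ t < N) :
    ∏ k ∈ Finset.range N, y k ^ ((S.filter fun t => eOrbLen σ t = k ∧ P t).card)
      = ∏ t ∈ S.filter P, y (eOrbLen σ t) := by
  rw [← Finset.prod_fiberwise_of_maps_to (g := fun t => eOrbLen σ t) (t := Finset.range N)
      (fun t ht => Finset.mem_range.2 (h t (Finset.mem_filter.1 ht).1))
      (fun t => y (eOrbLen σ t))]
  apply Finset.prod_congr rfl
  intro k hk
  have hfil : (S.filter P).filter (fun t => eOrbLen σ t = k)
      = S.filter (fun t => eOrbLen σ t = k ∧ P t) := by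
    rw [Finset.filter_filter]
    apply Finset.filter_congr
    intro t ht
    simp [and_comm]
  rw [hfil]
  have hconst : ∏ t ∈ S.filter (fun t => eOrbLen σ t = k ∧ P t), y (eOrbLen σ t)
      = ∏ t ∈ S.filter (fun t => eOrbLen σ t = k ∧ P t), y k :=
    Finset.prod_congr rfl (fun t ht => by rw [(Finset.mem_filter.1 ht).2.1])
  rw [hconst, Finset.prod_const]

lemma eOrbLen_lt (t : Sym2 V) :
    eOrbLen σ t < Fintype.card V * Fintype.card V + 2 := by
  have h1 : eOrbLen σ t ≤ Fintype.card (Sym2 V) := by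
    rw [eOrbLen]
    exact le_trans (Finset.card_filter_le _ _) (le_of_eq Finset.card_univ)
  have h2 : Fintype.card (Sym2 V) = Nat.choose (Fintype.card V + 1) 2 := Sym2.card
  set n := Fintype.card V with hn
  have h3 : Nat.choose (n + 1) 2 = (n + 1) * n / 2 := by
    rw [Nat.choose_two_right]
    simp
  have hle : n ≤ n * n := by
    cases n with
    | zero => simp
    | succ m => exact Nat.le_mul_of_pos_left _ (Nat.succ_pos m)
  have h4 : (n + 1) * n / 2 < n * n + 2 := by
    apply Nat.div_lt_of_lt_mul
    nlinarith
  omega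

lemma mob_filter_eq (T : Finset (Sym2 V)) (hT : T ⊆ RR σ) :
    T.filter (fun t => IsMobE σ t) = T.filter (fun t => ¬ IsCylE σ t) := by
  apply Finset.filter_congr
  intro t ht
  have htR := hT ht
  rw [RR, Finset.mem_filter] at htR
  have hd : ¬ (t : Sym2 V).IsDiag := mem_E.1 htR.1
  constructor
  · intro hm hc
    exact not_cyl_and_mob σ hd ⟨hc, hm⟩
  · intro hnc
    rcases cyl_or_mob σ hd with h | h
    · exact absurd h hnc
    · exact h

lemma w_gr (T : Finset (Sym2 V)) (hT : T ⊆ RR σ) :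
    w (gr σ T) σ =
      (∏ i ∈ Finset.range (Fintype.card V * Fintype.card V + 2), va i ^ vcyc σ i) *
        ∏ t ∈ T, (if IsCylE σ t then vb (eOrbLen σ t) else vc (eOrbLen σ t)) := by
  have hB : ∏ k ∈ Finset.range (Fintype.card V * Fintype.card V + 2),
      vb k ^ cylCnt (gr σ T) σ k
      = ∏ t ∈ T.filter (fun t => IsCylE σ t), vb (eOrbLen σ t) := by
    calc ∏ k ∈ Finset.range (Fintype.card V * Fintype.card V + 2),
          vb k ^ cylCnt (gr σ T) σ k
        = ∏ k ∈ Finset.range (Fintype.card V * Fintype.card V + 2),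
            vb k ^ (T.filter fun t => eOrbLen σ t = k ∧ IsCylE σ t).card :=
          Finset.prod_congr rfl (fun k _ => by rw [cylCnt_gr σ T hT k])
      _ = _ := regroup σ T _ vb _ (fun t _ => eOrbLen_lt σ t)
  have hC : ∏ k ∈ Finset.range (Fintype.card V * Fintype.card V + 2),
      vc k ^ mobCnt (gr σ T) σ k
      = ∏ t ∈ T.filter (fun t => IsMobE σ t), vc (eOrbLen σ t) := by
    calc ∏ k ∈ Finset.range (Fintype.card V * Fintype.card V + 2),
          vc k ^ mobCnt (gr σ T) σ k
        = ∏ k ∈ Finset.range (Fintype.card V * Fintype.card V + 2),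
            vc k ^ (T.filter fun t => eOrbLen σ t = k ∧ IsMobE σ t).card :=
          Finset.prod_congr rfl (fun k _ => by rw [mobCnt_gr σ T hT k])
      _ = _ := regroup σ T _ vc _ (fun t _ => eOrbLen_lt σ t)
  simp only [w]
  rw [hB, hC, mob_filter_eq σ T hT, mul_assoc,
    ← Finset.prod_ite (fun t => vb (eOrbLen σ t)) (fun t => vc (eOrbLen σ t))]

lemma rhs_eq : (∑ T ∈ (RR σ).powerset, w (gr σ T) σ) =
    (∏ i ∈ Finset.range (Fintype.card V * Fintype.card V + 2), va i ^ vcyc σ i) *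
    (∏ k ∈ Finset.range (Fintype.card V * Fintype.card V + 2),
        (1 + vb k) ^ cylCnt (⊤ : SimpleGraph V) σ k) *
    (∏ k ∈ Finset.range (Fintype.card V * Fintype.card V + 2),
        (1 + vc k) ^ mobCnt (⊤ : SimpleGraph V) σ k) := by
  have key : ∀ T ∈ (RR σ).powerset,
      w (gr σ T) σ =
        (∏ i ∈ Finset.range (Fintype.card V * Fintype.card V + 2), va i ^ vcyc σ i) *
          ∏ t ∈ T, (if IsCylE σ t then vb (eOrbLen σ t) else vc (eOrbLen σ t)) :=
    fun T hT => w_gr σ T (Finset.mem_powerset.1 hT)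
  rw [Finset.sum_congr rfl key, ← Finset.mul_sum]
  have hsum : ∑ T ∈ (RR σ).powerset,
        ∏ t ∈ T, (if IsCylE σ t then vb (eOrbLen σ t) else vc (eOrbLen σ t))
      = ∏ t ∈ RR σ,
          ((if IsCylE σ t then vb (eOrbLen σ t) else vc (eOrbLen σ t)) + 1) := by
    rw [Finset.prod_add (fun t => if IsCylE σ t then vb (eOrbLen σ t) else vc (eOrbLen σ t))
      (fun _ => (1 : WRing)) (RR σ)]
    symm
    apply Finset.sum_congr rfl
    intro T hT
    rw [Finset.prod_const_one, mul_one]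
  rw [hsum]
  have hite : ∀ t : Sym2 V,
      ((if IsCylE σ t then vb (eOrbLen σ t) else vc (eOrbLen σ t)) + 1)
        = (if IsCylE σ t then vb (eOrbLen σ t) + 1 else vc (eOrbLen σ t) + 1) := by
    intro t
    by_cases h : IsCylE σ t <;> simp [h]
  rw [Finset.prod_congr rfl (fun t _ => hite t),
    Finset.prod_ite (fun t => vb (eOrbLen σ t) + 1) (fun t => vc (eOrbLen σ t) + 1)]
  have hBR : ∏ t ∈ (RR σ).filter (fun t => IsCylE σ t), (vb (eOrbLen σ t) + 1)
      = ∏ k ∈ Finset.range (Fintype.card V * Fintype.card V + 2),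
          (vb k + 1) ^ cylCnt (⊤ : SimpleGraph V) σ k := by
    rw [← regroup σ (RR σ) _ (fun k => vb k + 1) _ (fun t _ => eOrbLen_lt σ t)]
    apply Finset.prod_congr rfl
    intro k hk
    rw [← cylCnt_gr σ (RR σ) (subset_refl _) k, gr_RR]
  have hCR : ∏ t ∈ (RR σ).filter (fun t => ¬ IsCylE σ t), (vc (eOrbLen σ t) + 1)
      = ∏ k ∈ Finset.range (Fintype.card V * Fintype.card V + 2),
          (vc k + 1) ^ mobCnt (⊤ : SimpleGraph V) σ k := by
    rw [← mob_filter_eq σ (RR σ) (subset_refl _),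
      ← regroup σ (RR σ) _ (fun k => vc k + 1) _ (fun t _ => eOrbLen_lt σ t)]
    apply Finset.prod_congr rfl
    intro k hk
    rw [← mobCnt_gr σ (RR σ) (subset_refl _) k, gr_RR]
  rw [hBR, hCR]
  simp only [add_comm (1 : WRing)]
  ring

end WalshAux

open WalshAux

/-- for a fixed permutation `σ` of `[n]`, the sum of the cycle index
monomials `w(G,σ)` over all simple graphs `G` on `[n]` admitting `σ` as an automorphism. -/
theorem walsh_sum_over_graphs (n : ℕ) (σ : Equiv.Perm (Fin n)) :
    ∑ G ∈ Finset.univ.filter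
        (fun G : SimpleGraph (Fin n) => ∀ u v : Fin n, G.Adj (σ u) (σ v) ↔ G.Adj u v),
        w G σ =
      (∏ i ∈ Finset.range (Fintype.card (Fin n) * Fintype.card (Fin n) + 2),
          va i ^ vcyc σ i) *
      (∏ k ∈ Finset.range (Fintype.card (Fin n) * Fintype.card (Fin n) + 2),
          (1 + vb k) ^ cylCnt (⊤ : SimpleGraph (Fin n)) σ k) *
      (∏ k ∈ Finset.range (Fintype.card (Fin n) * Fintype.card (Fin n) + 2),
          (1 + vc k) ^ mobCnt (⊤ : SimpleGraph (Fin n)) σ k) := by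
  have step1 : (∑ G ∈ Finset.univ.filter
        (fun G : SimpleGraph (Fin n) => ∀ u v : Fin n, G.Adj (σ u) (σ v) ↔ G.Adj u v),
        w G σ) = ∑ T ∈ (RR σ).powerset, w (gr σ T) σ := by
    apply Finset.sum_nbij' (i := fun G => tset σ G) (j := fun T => gr σ T)
    · intro G hG
      exact tG_mem σ G
    · intro T hT
      exact Finset.mem_filter.2 ⟨Finset.mem_univ _, gr_auto σ T⟩
    · intro G hG
      exact gr_tG σ ((Finset.mem_filter.1 hG).2)
    · intro T hT
      exact tG_gr σ hT
    · intro G hG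
      rw [gr_tG σ ((Finset.mem_filter.1 hG).2)]
  rw [step1, rhs_eq σ]
end
end
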